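/- arXiv:2410.13426 — 6 statements merged into one kernel-verified Lean document; each statement's English description precedes it below -/
import Mathlib

section
/- For any nonempty word w with |w| = n and any integer q ≥ 1 and any k with nq ≤ k < n(q+1), the probability P{T_w(X) = k} is at most p(w)(1 − p(w))^{q−1}. -/
open MeasureTheory ENNReal

/-- `w` occurs as a factor (contiguous subword) of the infinite word `ξ`. -/
def occursIn {r : ℕ} (w : List (Fin r)) (ξ : ℕ → Fin r) : Prop :=
  ∃ i : ℕ, ∀ j : ℕ, (hj : j < w.length) → ξ (i + j) = w.get ⟨j, hj⟩

/-- The waiting time `T_w(ξ)`: the first time `k` at which `w` has just occurred,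
i.e. `ξ[k-|w|+1, k] = w` (0-indexed: positions `k-|w|, …, k-1`); `∞` if `w` never occurs. -/
noncomputable def waitTime {r : ℕ} (w : List (Fin r)) (ξ : ℕ → Fin r) : ℝ≥0∞ :=
  sInf {t : ℝ≥0∞ | ∃ k : ℕ, t = k ∧ w.length ≤ k ∧
    ∀ j : ℕ, (hj : j < w.length) → ξ (k - w.length + j) = w.get ⟨j, hj⟩}

/-- Expected waiting time `E(w)`. -/
noncomputable def Ew {r : ℕ} (μ : Measure (ℕ → Fin r)) (w : List (Fin r)) : ℝ≥0∞ :=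
  ∫⁻ ξ, waitTime w ξ ∂μ

/-- The infinite word `w'ξ` obtained by prepending the finite word `w'` to `ξ`. -/
def prepend {r : ℕ} (w' : List (Fin r)) (ξ : ℕ → Fin r) : ℕ → Fin r :=
  fun n => if h : n < w'.length then w'.get ⟨n, h⟩ else ξ (n - w'.length)

/-- Conditional expected waiting time `E(u | w') = E[T_u(w'X)] − |w'|`. -/
noncomputable def condEw {r : ℕ} (μ : Measure (ℕ → Fin r)) (u w' : List (Fin r)) : ℝ≥0∞ :=
  (∫⁻ ξ, waitTime u (prepend w' ξ) ∂μ) - w'.length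

/-- `p(w) = ∏ᵢ p(w(i))`. -/
noncomputable def pword {r : ℕ} (p : Fin r → ℝ≥0∞) (w : List (Fin r)) : ℝ≥0∞ := (w.map p).prod

/-- `v` is a bifix of `w`: `v ≠ w` and `v` is both a prefix and a suffix of `w`. -/
def IsBifix {r : ℕ} (v w : List (Fin r)) : Prop := v ≠ w ∧ v <+: w ∧ v <:+ w

/-- `v` is the longest bifix of `w`. -/
def IsLongestBifix {r : ℕ} (v w : List (Fin r)) : Prop :=
  IsBifix v w ∧ ∀ v', IsBifix v' w → v'.length ≤ v.length


/-!
If `T_w(ξ) = k` with `k = a + q|w|`, cut the first `k` letters of `ξ` into an arbitrary word of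
length `a` followed by `q` blocks of length `|w|`. The last block is `w`, and none of the others
is, since otherwise `w` would have occurred before time `k`. Hence `{T_w = k}` is covered by the
cylinders of these words, whose total mass is `1 · (1 - p(w))^(q-1) · p(w)`.
-/

section Window

variable {α : Type*}

def window (ξ : ℕ → α) (s n : ℕ) : List α :=
  (List.range n).map fun i => ξ (s + i)

@[simp]
lemma length_window (ξ : ℕ → α) (s n : ℕ) : (window ξ s n).length = n := by
  simp [window]

lemma window_add (ξ : ℕ → α) (s m n : ℕ) :
    window ξ s (m + n) = window ξ s m ++ window ξ (s + m) n := by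
  simp [window, List.range_add, Function.comp_def, add_assoc]

lemma window_eq_iff {ξ : ℕ → α} {s : ℕ} {w : List α} :
    window ξ s w.length = w ↔ ∀ j (hj : j < w.length), ξ (s + j) = w.get ⟨j, hj⟩ := by
  simp [window, List.ext_get_iff]

lemma window_zero_eq_window_zero_iff {ξ η : ℕ → α} {m : ℕ} :
    window ξ 0 m = window η 0 m ↔ ∀ i < m, ξ i = η i := by
  simp [window, List.map_inj_left]

end Window

variable {r : ℕ}

lemma pword_window (p : Fin r → ℝ≥0∞) (ξ : ℕ → Fin r) (m : ℕ) :
    pword p (window ξ 0 m) = ∏ i ∈ Finset.range m, p (ξ i) := by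
  simp only [pword, window, List.map_map, zero_add]
  rfl

section Cylinders

variable {p : Fin r → ℝ≥0∞} {μ : Measure (ℕ → Fin r)}

lemma measure_window_eq_le
    (hiid : ∀ (m : ℕ) (f : ℕ → Fin r),
      μ {ξ | ∀ i < m, ξ i = f i} = ∏ i ∈ Finset.range m, p (f i))
    (m : ℕ) (u : List (Fin r)) : μ {ξ | window ξ 0 m = u} ≤ pword p u := by
  rcases Set.eq_empty_or_nonempty {ξ | window ξ 0 m = u} with h | ⟨η, rfl⟩
  · simp [h]
  · simp only [window_zero_eq_window_zero_iff, pword_window, hiid, le_refl]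

lemma measure_window_mem_le
    (hiid : ∀ (m : ℕ) (f : ℕ → Fin r),
      μ {ξ | ∀ i < m, ξ i = f i} = ∏ i ∈ Finset.range m, p (f i))
    (m : ℕ) (S : Finset (List (Fin r))) :
    μ {ξ | window ξ 0 m ∈ S} ≤ ∑ u ∈ S, pword p u := by
  have hcover : {ξ | window ξ 0 m ∈ S} = ⋃ u ∈ S, {ξ | window ξ 0 m = u} := by
    ext ξ
    simp
  rw [hcover]
  exact (measure_biUnion_finset_le S _).trans
    (Finset.sum_le_sum fun u _ => measure_window_eq_le hiid m u)

end Cylinders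

section Words

variable (p : Fin r → ℝ≥0∞)

lemma pword_append (u v : List (Fin r)) : pword p (u ++ v) = pword p u * pword p v := by
  simp [pword]

variable (r) in
def wordsOfLength (m : ℕ) : Finset (List (Fin r)) :=
  Finset.univ.image (List.ofFn : (Fin m → Fin r) → List (Fin r))

lemma mem_wordsOfLength {m : ℕ} {u : List (Fin r)} : u ∈ wordsOfLength r m ↔ u.length = m := by
  constructor
  · simp only [wordsOfLength, Finset.mem_image]
    rintro ⟨g, -, rfl⟩
    exact List.length_ofFn
  · rintro rfl
    exact Finset.mem_image.2 ⟨u.get, Finset.mem_univ _, List.ofFn_get u⟩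

variable {p}

lemma sum_pword_wordsOfLength (hp1 : ∑ x, p x = 1) (m : ℕ) :
    ∑ u ∈ wordsOfLength r m, pword p u = 1 := by
  rw [wordsOfLength, Finset.sum_image fun _ _ _ _ h => List.ofFn_injective h]
  simp [pword, List.map_ofFn, List.prod_ofFn, Function.comp_def, ← Fintype.sum_pow, hp1]

lemma sum_pword_erase_wordsOfLength (hp1 : ∑ x, p x = 1) (w : List (Fin r)) :
    ∑ u ∈ (wordsOfLength r w.length).erase w, pword p u = 1 - pword p w := by
  have h := Finset.add_sum_erase _ (pword p) (mem_wordsOfLength.2 (rfl : w.length = w.length))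
  rw [sum_pword_wordsOfLength hp1, add_comm] at h
  exact ENNReal.eq_sub_of_add_eq' one_ne_top h

lemma sum_pword_image₂_append {S T : Finset (List (Fin r))} {m : ℕ}
    (hS : ∀ u ∈ S, u.length = m) :
    ∑ u ∈ Finset.image₂ (· ++ ·) S T, pword p u = (∑ u ∈ S, pword p u) * ∑ v ∈ T, pword p v := by
  rw [← Finset.image_uncurry_product, Finset.sum_image, Finset.sum_product, Finset.sum_mul_sum]
  · simp [pword_append]
  · rintro ⟨u, v⟩ huv ⟨u', v'⟩ hu'v' h
    simp only [Finset.coe_product, Set.mem_prod, Finset.mem_coe] at huv hu'v'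
    obtain ⟨rfl, rfl⟩ := List.append_inj h ((hS u huv.1).trans (hS u' hu'v'.1).symm)
    rfl

/-- Words `b₁ ⋯ bₜ w` made of `t` blocks of length `|w|` different from `w`, followed by `w`. -/
def blockWords (w : List (Fin r)) : ℕ → Finset (List (Fin r))
  | 0 => {w}
  | t + 1 => Finset.image₂ (· ++ ·) ((wordsOfLength r w.length).erase w) (blockWords w t)

lemma sum_pword_blockWords (hp1 : ∑ x, p x = 1) (w : List (Fin r)) (t : ℕ) :
    ∑ u ∈ blockWords w t, pword p u = pword p w * (1 - pword p w) ^ t := by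
  induction t with
  | zero => simp [blockWords]
  | succ t ih =>
    rw [blockWords, sum_pword_image₂_append fun u hu =>
      mem_wordsOfLength.1 (Finset.mem_of_mem_erase hu), sum_pword_erase_wordsOfLength hp1, ih]
    ring

lemma window_mem_blockWords {ξ : ℕ → Fin r} {w : List (Fin r)} {s t : ℕ}
    (hblocks : ∀ j < t, window ξ (s + j * w.length) w.length ≠ w)
    (hlast : window ξ (s + t * w.length) w.length = w) :
    window ξ s (t * w.length + w.length) ∈ blockWords w t := by
  induction t generalizing s with
  | zero => simpa [blockWords] using hlast
  | succ t ih =>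
    have hsplit : (t + 1) * w.length + w.length = w.length + (t * w.length + w.length) := by ring
    rw [hsplit, window_add, blockWords]
    refine Finset.mem_image₂_of_mem ?_ (ih (fun j hj => ?_) ?_)
    · exact Finset.mem_erase.2 ⟨by simpa using hblocks 0 t.succ_pos, mem_wordsOfLength.2 (by simp)⟩
    · simpa [add_assoc, add_mul, add_comm] using hblocks (j + 1) (by omega)
    · simpa [add_assoc, add_mul, add_comm] using hlast

end Words

section WaitingTime

variable {w : List (Fin r)} {ξ : ℕ → Fin r} {k : ℕ}

def OccursAt (w : List (Fin r)) (ξ : ℕ → Fin r) (k : ℕ) : Prop :=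
  w.length ≤ k ∧ window ξ (k - w.length) w.length = w

lemma waitTime_eq_sInf (w : List (Fin r)) (ξ : ℕ → Fin r) :
    waitTime w ξ = sInf {t : ℝ≥0∞ | ∃ k : ℕ, t = k ∧ OccursAt w ξ k} := by
  simp [waitTime, OccursAt, window_eq_iff]

lemma waitTime_le_of_occursAt (h : OccursAt w ξ k) : waitTime w ξ ≤ k :=
  waitTime_eq_sInf w ξ ▸ sInf_le ⟨k, rfl, h⟩

lemma not_occursAt_of_lt_waitTime {k' : ℕ} (h : waitTime w ξ = k) (hk' : k' < k) : ¬ OccursAt w ξ k' :=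
  fun hocc => (Nat.cast_lt.2 hk').not_ge (h ▸ waitTime_le_of_occursAt hocc)

lemma occursAt_of_waitTime_eq (h : waitTime w ξ = k) : OccursAt w ξ k := by
  by_contra hk
  have hgt : ((k + 1 : ℕ) : ℝ≥0∞) ≤ waitTime w ξ := by
    rw [waitTime_eq_sInf]
    refine le_sInf ?_
    rintro _ ⟨k', rfl, hocc⟩
    have hne : k' ≠ k := fun e => hk (e ▸ hocc)
    have hge : k ≤ k' := not_lt.1 fun hlt => not_occursAt_of_lt_waitTime h hlt hocc
    exact Nat.cast_le.2 (by omega)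
  rw [h] at hgt
  exact absurd (Nat.cast_le.1 hgt) (by omega)

lemma window_mem_blockWords_of_waitTime_eq {a t : ℕ} (hw : w ≠ [])
    (h : waitTime w ξ = (a + (t * w.length + w.length) : ℕ)) :
    window ξ a (t * w.length + w.length) ∈ blockWords w t := by
  have hn : 0 < w.length := List.length_pos_iff.2 hw
  refine window_mem_blockWords (fun j hj hocc => ?_) ?_
  · refine not_occursAt_of_lt_waitTime h (k' := a + j * w.length + w.length) ?_ ⟨by omega, by simpa⟩
    nlinarith
  · have hstart : a + (t * w.length + w.length) - w.length = a + t * w.length := by omega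
    simpa [hstart] using (occursAt_of_waitTime_eq h).2

end WaitingTime

theorem statement_2_general {r : ℕ} (p : Fin r → ℝ≥0∞)
    (hp1 : ∑ x, p x = 1)
    (μ : Measure (ℕ → Fin r))
    (hiid : ∀ (m : ℕ) (f : ℕ → Fin r),
      μ {ξ | ∀ i < m, ξ i = f i} = ∏ i ∈ Finset.range m, p (f i))
    (w : List (Fin r)) (hw : w ≠ []) (q k : ℕ) (hq : 1 ≤ q)
    (h1 : w.length * q ≤ k) :
    μ {ξ | waitTime w ξ = k} ≤ pword p w * (1 - pword p w) ^ (q - 1) := by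
  obtain ⟨t, rfl⟩ : ∃ t, q = t + 1 := ⟨q - 1, by omega⟩
  set n := w.length
  obtain ⟨a, rfl⟩ : ∃ a, k = a + (t * n + n) := ⟨k - (t * n + n), by rw [mul_add_one] at h1; lia⟩
  have hcover : {ξ | waitTime w ξ = (a + (t * n + n) : ℕ)} ⊆
      {ξ | window ξ 0 (a + (t * n + n)) ∈
        Finset.image₂ (· ++ ·) (wordsOfLength r a) (blockWords w t)} := fun ξ hξ => by
    rw [Set.mem_ofPred_eq, window_add, zero_add]
    exact Finset.mem_image₂_of_mem (mem_wordsOfLength.2 (length_window ξ 0 a))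
      (window_mem_blockWords_of_waitTime_eq hw hξ)
  calc μ {ξ | waitTime w ξ = (a + (t * n + n) : ℕ)}
      ≤ ∑ u ∈ Finset.image₂ (· ++ ·) (wordsOfLength r a) (blockWords w t), pword p u :=
        (measure_mono hcover).trans (measure_window_mem_le hiid _ _)
    _ = pword p w * (1 - pword p w) ^ (t + 1 - 1) := by
      rw [sum_pword_image₂_append fun u hu => mem_wordsOfLength.1 hu,
        sum_pword_wordsOfLength hp1, sum_pword_blockWords hp1, one_mul, Nat.add_sub_cancel]

theorem statement_2 {r : ℕ} (hr : 2 ≤ r) (p : Fin r → ℝ≥0∞)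
    (hp1 : ∑ x, p x = 1) (hpos : ∀ x, 0 < p x)
    (μ : Measure (ℕ → Fin r)) [IsProbabilityMeasure μ]
    (hiid : ∀ (m : ℕ) (f : ℕ → Fin r),
      μ {ξ | ∀ i < m, ξ i = f i} = ∏ i ∈ Finset.range m, p (f i))
    (w : List (Fin r)) (hw : w ≠ []) (q k : ℕ) (hq : 1 ≤ q)
    (h1 : w.length * q ≤ k) (h2 : k < w.length * (q + 1)) :
    μ {ξ | waitTime w ξ = k} ≤ pword p w * (1 - pword p w) ^ (q - 1) :=
  statement_2_general p hp1 μ hiid w hw q k hq h1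
end

section
/- If a finite word w factors as w = w₁w₂ (concatenation of finite words), then E(w) = E(w | w₁) + E(w₁), where E(w | w') is the expected additional waiting time for w to occur after the prefix w' has been written. -/
open MeasureTheory ENNReal

/-! Let `τ` be the first time at which `w₁` has just been written. On `{τ = k}` the letters
`ξ (k - |w₁|), …, ξ (k - 1)` spell `w₁` and no occurrence of `w₁ ++ w₂` ends before `k + |w₂|`,
so `T_{w₁w₂}(ξ) + |w₁| = k + T_{w₁w₂}(w₁ · ξ(k + ·))`. The event `{τ = k}` only depends on the
first `k` letters, and for an i.i.d. sequence the shifted sequence `ξ(k + ·)` is independent of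
such events and has the law of `ξ` (checked on cylinders). Averaging over `k` gives
`E(w₁w₂) + |w₁| = E(w₁) + E[T_{w₁w₂}(w₁X)]`. If `E(w₁) = ∞` both sides are infinite, since
`T_{w₁} ≤ T_{w₁w₂}`. -/

namespace WordOccurrence

variable {r : ℕ} {p : Fin r → ℝ≥0∞} {μ : Measure (ℕ → Fin r)}

def matchEnds (w : List (Fin r)) (ξ : ℕ → Fin r) : Set ℕ :=
  {k | w.length ≤ k ∧ ∀ j : ℕ, (hj : j < w.length) → ξ (k - w.length + j) = w.get ⟨j, hj⟩}

def shift (k : ℕ) (ξ : ℕ → Fin r) : ℕ → Fin r := fun n => ξ (k + n)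

lemma waitTime_eq_sInf (w : List (Fin r)) (ξ : ℕ → Fin r) :
    waitTime w ξ = sInf (((↑) : ℕ → ℝ≥0∞) '' matchEnds w ξ) := by
  simp only [waitTime, matchEnds, Set.image, Set.mem_ofPred_eq]
  congr 1
  ext t
  constructor
  · rintro ⟨k, rfl, hk⟩
    exact ⟨k, hk, rfl⟩
  · rintro ⟨k, hk, rfl⟩
    exact ⟨k, rfl, hk⟩

lemma sInf_natCast_image {S : Set ℕ} (hS : S.Nonempty) :
    sInf (((↑) : ℕ → ℝ≥0∞) '' S) = ↑(sInf S) :=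
  le_antisymm (sInf_le ⟨_, Nat.sInf_mem hS, rfl⟩)
    (le_sInf <| by rintro _ ⟨k, hk, rfl⟩; exact Nat.cast_le.2 (Nat.sInf_le hk))

lemma waitTime_eq_natCast_iff {w : List (Fin r)} {ξ : ℕ → Fin r} {k : ℕ} :
    waitTime w ξ = k ↔ IsLeast (matchEnds w ξ) k := by
  rw [waitTime_eq_sInf]
  rcases (matchEnds w ξ).eq_empty_or_nonempty with hS | hS
  · simp [hS, IsLeast]
  · rw [sInf_natCast_image hS, Nat.cast_inj]
    exact ⟨fun h => h ▸ isLeast_csInf hS, IsLeast.csInf_eq⟩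

lemma exists_waitTime_eq_natCast {w : List (Fin r)} {ξ : ℕ → Fin r} (h : waitTime w ξ ≠ ⊤) :
    ∃ k : ℕ, waitTime w ξ = k := by
  rw [waitTime_eq_sInf] at h ⊢
  rcases (matchEnds w ξ).eq_empty_or_nonempty with hS | hS
  · simp [hS] at h
  · exact ⟨_, sInf_natCast_image hS⟩

lemma length_le_waitTime (w : List (Fin r)) (ξ : ℕ → Fin r) :
    (w.length : ℝ≥0∞) ≤ waitTime w ξ :=
  (waitTime_eq_sInf w ξ).symm ▸ le_sInf (by rintro _ ⟨k, hk, rfl⟩; exact Nat.cast_le.2 hk.1)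

lemma measurableSet_setOf_mem_matchEnds (w : List (Fin r)) (k : ℕ) :
    MeasurableSet {ξ : ℕ → Fin r | k ∈ matchEnds w ξ} :=
  measurableSet_setOfPred.2 <|
    measurable_const.and (.forall fun _ => .forall fun _ => (measurable_pi_apply _).eq_const _)

lemma measurable_waitTime (w : List (Fin r)) : Measurable (waitTime w) := by
  classical
  have h : waitTime w = fun ξ => ⨅ k : ℕ, if k ∈ matchEnds w ξ then (k : ℝ≥0∞) else ⊤ := by
    funext ξ
    rw [waitTime_eq_sInf, sInf_image]
    exact iInf_congr fun k => by by_cases hk : k ∈ matchEnds w ξ <;> simp [hk]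
  rw [h]
  exact .iInf fun k => .ite (measurableSet_setOf_mem_matchEnds w k) measurable_const measurable_const

lemma measurable_prepend (w : List (Fin r)) : Measurable (prepend w) :=
  measurable_pi_lambda _ fun n => by
    by_cases hn : n < w.length
    · simp only [prepend, hn, dif_pos]; exact measurable_const
    · simp only [prepend, hn, dif_neg, not_false_iff]; exact measurable_pi_apply _

lemma measurable_shift (k : ℕ) : Measurable (shift (r := r) k) :=
  measurable_pi_lambda _ fun n => measurable_pi_apply (k + n)

lemma mem_matchEnds_shift {w : List (Fin r)} {ξ : ℕ → Fin r} {j m : ℕ} (hm : w.length ≤ m) :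
    m ∈ matchEnds w (shift j ξ) ↔ j + m ∈ matchEnds w ξ := by
  simp only [matchEnds, shift, Set.mem_ofPred_eq, hm, true_and, le_add_left hm]
  refine forall_congr' fun i => forall_congr' fun hi => ?_
  rw [show j + (m - w.length + i) = j + m - w.length + i by omega]

lemma waitTime_eq_add_waitTime_shift {w : List (Fin r)} {ξ : ℕ → Fin r} {j : ℕ}
    (h : ∀ m ∈ matchEnds w ξ, j + w.length ≤ m) :
    waitTime w ξ = j + waitTime w (shift j ξ) := by
  have hS : matchEnds w ξ = (j + ·) '' matchEnds w (shift j ξ) := by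
    ext m
    refine ⟨fun hm => ⟨m - j, ?_, ?_⟩, ?_⟩
    · have := h m hm
      rw [mem_matchEnds_shift (by omega), Nat.add_sub_cancel' (by omega)]
      exact hm
    · have := h m hm
      change j + (m - j) = m
      omega
    · rintro ⟨m, hm, rfl⟩
      exact (mem_matchEnds_shift hm.1).1 hm
  rw [waitTime_eq_sInf, waitTime_eq_sInf, hS, Set.image_image, sInf_image, sInf_image,
    ENNReal.add_iInf]
  refine iInf_congr fun m => ?_
  rw [ENNReal.add_iInf, Nat.cast_add]

lemma prepend_shift_eq {w : List (Fin r)} {ξ : ℕ → Fin r} {k : ℕ} (hk : k ∈ matchEnds w ξ) :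
    prepend w (shift k ξ) = shift (k - w.length) ξ := by
  funext n
  by_cases hn : n < w.length
  · simp only [prepend, hn, dif_pos, shift]
    exact (hk.2 n hn).symm
  · simp only [prepend, hn, dif_neg, not_false_iff, shift]
    congr 1
    have := hk.1
    omega

lemma sub_length_mem_matchEnds_of_append {w₁ w₂ : List (Fin r)} {ξ : ℕ → Fin r} {m : ℕ}
    (hm : m ∈ matchEnds (w₁ ++ w₂) ξ) : m - w₂.length ∈ matchEnds w₁ ξ := by
  obtain ⟨hlen, hmatch⟩ := hm
  rw [List.length_append] at hlen
  refine ⟨by omega, fun j hj => ?_⟩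
  have := hmatch j (by rw [List.length_append]; omega)
  rw [show m - (w₁ ++ w₂).length + j = m - w₂.length - w₁.length + j by
    rw [List.length_append]; omega] at this
  simpa [List.getElem_append_left hj] using this

lemma waitTime_le_waitTime_append (w₁ w₂ : List (Fin r)) (ξ : ℕ → Fin r) :
    waitTime w₁ ξ ≤ waitTime (w₁ ++ w₂) ξ := by
  rw [waitTime_eq_sInf, waitTime_eq_sInf]
  refine le_sInf ?_
  rintro _ ⟨m, hm, rfl⟩
  exact (sInf_le (Set.mem_image_of_mem _ (sub_length_mem_matchEnds_of_append hm))).trans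
    (Nat.cast_le.2 (Nat.sub_le _ _))

lemma mem_matchEnds_congr {w : List (Fin r)} {ξ η : ℕ → Fin r} {k m : ℕ}
    (h : ∀ i < k, ξ i = η i) (hm : m ≤ k) : m ∈ matchEnds w ξ ↔ m ∈ matchEnds w η :=
  and_congr_right fun hlen => forall₂_congr fun j hj => by rw [h _ (by omega)]

lemma waitTime_eq_natCast_congr {w : List (Fin r)} {ξ η : ℕ → Fin r} {k : ℕ}
    (h : ∀ i < k, ξ i = η i) (hξ : waitTime w ξ = k) : waitTime w η = k := by
  obtain ⟨hk, hleast⟩ := waitTime_eq_natCast_iff.1 hξ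
  refine waitTime_eq_natCast_iff.2 ⟨(mem_matchEnds_congr h le_rfl).1 hk, fun m hm => ?_⟩
  by_contra hlt
  exact hlt (hleast ((mem_matchEnds_congr h (by omega)).2 hm))

lemma waitTime_append_add_length {w₁ w₂ : List (Fin r)} {ξ : ℕ → Fin r} {k : ℕ}
    (hk : waitTime w₁ ξ = k) :
    waitTime (w₁ ++ w₂) ξ + w₁.length = k + waitTime (w₁ ++ w₂) (prepend w₁ (shift k ξ)) := by
  obtain ⟨hk, hleast⟩ := waitTime_eq_natCast_iff.1 hk
  have hlen := hk.1
  rw [prepend_shift_eq hk, waitTime_eq_add_waitTime_shift (j := k - w₁.length), add_right_comm,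
    ← Nat.cast_add, Nat.sub_add_cancel hlen]
  intro m hm
  have h₁ := hleast (sub_length_mem_matchEnds_of_append hm)
  have h₂ := hm.1
  rw [List.length_append] at h₂ ⊢
  omega

def prefixCyl (k : ℕ) (ξ : ℕ → Fin r) : Set (ℕ → Fin r) := {η | ∀ i < k, η i = ξ i}

def IsIIDWith (p : Fin r → ℝ≥0∞) (μ : Measure (ℕ → Fin r)) : Prop :=
  ∀ k ξ, μ (prefixCyl k ξ) = ∏ i ∈ Finset.range k, p (ξ i)

lemma measurableSet_prefixCyl (k : ℕ) (ξ : ℕ → Fin r) : MeasurableSet (prefixCyl k ξ) :=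
  measurableSet_setOfPred.2 <| .forall fun i => .forall fun _ => (measurable_pi_apply i).eq_const _

lemma prefixCyl_eq_of_mem {k : ℕ} {ξ ζ : ℕ → Fin r} (h : ζ ∈ prefixCyl k ξ) :
    prefixCyl k ξ = prefixCyl k ζ := by
  ext η
  exact forall₂_congr fun i hi => by rw [h i hi]

lemma prefixCyl_inter_prefixCyl (k m : ℕ) (ξ : ℕ → Fin r) :
    prefixCyl k ξ ∩ prefixCyl m ξ = prefixCyl (max k m) ξ := by
  ext η
  simp only [prefixCyl, Set.mem_inter_iff, Set.mem_ofPred_eq, lt_max_iff]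
  exact ⟨fun h i hi => hi.elim (h.1 i) (h.2 i), fun h => ⟨fun i hi => h i (.inl hi),
    fun i hi => h i (.inr hi)⟩⟩

lemma isPiSystem_prefixCyl : IsPiSystem {A : Set (ℕ → Fin r) | ∃ k ξ, prefixCyl k ξ = A} := by
  rintro _ ⟨k, ξ, rfl⟩ _ ⟨m, η, rfl⟩ ⟨ζ, hξ, hη⟩
  exact ⟨max k m, ζ, by
    rw [prefixCyl_eq_of_mem hξ, prefixCyl_eq_of_mem hη, prefixCyl_inter_prefixCyl]⟩

lemma generateFrom_prefixCyl :
    MeasurableSpace.generateFrom {A : Set (ℕ → Fin r) | ∃ k ξ, prefixCyl k ξ = A} =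
      MeasurableSpace.pi := by
  refine le_antisymm (MeasurableSpace.generateFrom_le ?_) (iSup_le fun i => ?_)
  · rintro _ ⟨k, ξ, rfl⟩
    exact measurableSet_prefixCyl k ξ
  refine Measurable.comap_le (@measurable_to_countable' _ _ _ _
    (MeasurableSpace.generateFrom {A | ∃ k ξ, prefixCyl k ξ = A}) _ fun c => ?_)
  have h : (fun ξ : ℕ → Fin r => ξ i) ⁻¹' {c} =
      ⋃ f : Fin i → Fin r, prefixCyl (i + 1) fun n => if h : n < i then f ⟨n, h⟩ else c := by
    ext ξ
    simp only [Set.mem_preimage, Set.mem_singleton_iff, Set.mem_iUnion, prefixCyl,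
      Set.mem_ofPred_eq]
    refine ⟨fun hξ => ⟨fun j => ξ j, fun n hn => ?_⟩, fun ⟨f, hf⟩ => by simpa using hf i i.lt_succ_self⟩
    by_cases hni : n < i
    · simp [hni]
    · simp [show n = i by omega, hξ]
  rw [h]
  exact .iUnion fun f => MeasurableSpace.measurableSet_generateFrom ⟨_, _, rfl⟩

lemma ext_of_prefixCyl {ν₁ ν₂ : Measure (ℕ → Fin r)} [IsFiniteMeasure ν₁]
    (h : ∀ k ξ, ν₁ (prefixCyl k ξ) = ν₂ (prefixCyl k ξ)) : ν₁ = ν₂ := by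
  rcases isEmpty_or_nonempty (ℕ → Fin r) with hempty | ⟨⟨ξ₀⟩⟩
  · exact Subsingleton.elim _ _
  refine ext_of_generate_finite _ generateFrom_prefixCyl.symm isPiSystem_prefixCyl ?_ ?_
  · rintro _ ⟨k, ξ, rfl⟩
    exact h k ξ
  · simpa [prefixCyl] using h 0 ξ₀

lemma prefixCyl_inter_shift_preimage (k m : ℕ) (ξ η : ℕ → Fin r) :
    prefixCyl k ξ ∩ shift k ⁻¹' prefixCyl m η =
      prefixCyl (k + m) fun n => if n < k then ξ n else η (n - k) := by
  ext ζ
  simp only [prefixCyl, shift, Set.mem_inter_iff, Set.mem_preimage, Set.mem_ofPred_eq]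
  constructor
  · rintro ⟨hξ, hη⟩ i hi
    by_cases hik : i < k
    · simp [hik, hξ i hik]
    · simpa [hik, show k + (i - k) = i by omega] using hη (i - k) (by omega)
  · intro h
    exact ⟨fun i hi => by simpa [hi] using h i (by omega),
      fun i hi => by simpa using h (k + i) (by omega)⟩

lemma IsIIDWith.measure_prefixCyl_inter_shift_preimage (hμ : IsIIDWith p μ) (k m : ℕ)
    (ξ η : ℕ → Fin r) :
    μ (prefixCyl k ξ ∩ shift k ⁻¹' prefixCyl m η) = μ (prefixCyl k ξ) * μ (prefixCyl m η) := by
  rw [prefixCyl_inter_shift_preimage, hμ, hμ, hμ, Finset.prod_range_add]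
  congr 1
  · exact Finset.prod_congr rfl fun i hi => by simp [Finset.mem_range.1 hi]
  · exact Finset.prod_congr rfl fun i _ => by simp

/-- Splitting `A` along the values of the first `k` letters: each piece is empty or a cylinder. -/
lemma IsIIDWith.measure_inter_shift_preimage (hμ : IsIIDWith p μ) {k : ℕ} {A : Set (ℕ → Fin r)}
    (hA : ∀ ξ η, (∀ i < k, ξ i = η i) → ξ ∈ A → η ∈ A) (m : ℕ) (η : ℕ → Fin r) :
    μ (A ∩ shift k ⁻¹' prefixCyl m η) = μ A * μ (prefixCyl m η) := by
  set B : (Fin k → Fin r) → Set (ℕ → Fin r) := fun f => A ∩ {ξ | ∀ i : Fin k, ξ i = f i}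
  have hB : ∀ f, B f = ∅ ∨ ∃ ζ, B f = prefixCyl k ζ := by
    refine fun f => (B f).eq_empty_or_nonempty.imp_right fun ⟨ζ, hζA, hζf⟩ => ⟨ζ, ?_⟩
    ext ξ
    refine ⟨fun ⟨_, hξf⟩ i hi => (hξf ⟨i, hi⟩).trans (hζf ⟨i, hi⟩).symm, fun hξ => ?_⟩
    exact ⟨hA ζ ξ (fun i hi => (hξ i hi).symm) hζA, fun i => (hξ i i.2).trans (hζf i)⟩
  have hBmeas : ∀ f, MeasurableSet (B f) := fun f => by
    rcases hB f with h | ⟨ζ, h⟩ <;> rw [h]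
    exacts [.empty, measurableSet_prefixCyl k ζ]
  have hdisj : Pairwise (Function.onFun Disjoint B) := fun f g hfg => Set.disjoint_left.2
    fun ξ ⟨_, hf⟩ ⟨_, hg⟩ => hfg (funext fun i => (hf i).symm.trans (hg i))
  have hAB : A = ⋃ f, B f := by
    have hcover : (⋃ f : Fin k → Fin r, {ξ : ℕ → Fin r | ∀ i : Fin k, ξ i = f i}) = Set.univ :=
      Set.eq_univ_of_forall fun ξ => Set.mem_iUnion.2 ⟨fun i => ξ i, fun _ => rfl⟩
    rw [← Set.inter_iUnion, hcover, Set.inter_univ]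
  have hS : MeasurableSet (shift k ⁻¹' prefixCyl m η) :=
    measurable_shift k (measurableSet_prefixCyl m η)
  calc μ (A ∩ shift k ⁻¹' prefixCyl m η)
      = ∑' f, μ (B f ∩ shift k ⁻¹' prefixCyl m η) := by
        rw [hAB, Set.iUnion_inter, measure_iUnion
          (fun f g hfg => (hdisj hfg).mono Set.inter_subset_left Set.inter_subset_left)
          fun f => (hBmeas f).inter hS]
    _ = ∑' f, μ (B f) * μ (prefixCyl m η) := by
        refine tsum_congr fun f => ?_
        rcases hB f with h | ⟨ζ, h⟩ <;> rw [h]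
        · simp
        · exact hμ.measure_prefixCyl_inter_shift_preimage k m ζ η
    _ = μ A * μ (prefixCyl m η) := by
        rw [ENNReal.tsum_mul_right, ← measure_iUnion hdisj hBmeas, ← hAB]

lemma IsIIDWith.map_restrict_shift [IsFiniteMeasure μ] (hμ : IsIIDWith p μ) {k : ℕ}
    {A : Set (ℕ → Fin r)} (hA : ∀ ξ η, (∀ i < k, ξ i = η i) → ξ ∈ A → η ∈ A) :
    (μ.restrict A).map (shift k) = μ A • μ :=
  ext_of_prefixCyl fun m η => by
    rw [Measure.map_apply (measurable_shift k) (measurableSet_prefixCyl m η),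
      Measure.restrict_apply (measurable_shift k (measurableSet_prefixCyl m η)), Set.inter_comm,
      hμ.measure_inter_shift_preimage hA, Measure.smul_apply, smul_eq_mul]

lemma IsIIDWith.setLIntegral_comp_shift [IsFiniteMeasure μ] (hμ : IsIIDWith p μ) {k : ℕ}
    {A : Set (ℕ → Fin r)} (hA : ∀ ξ η, (∀ i < k, ξ i = η i) → ξ ∈ A → η ∈ A)
    {g : (ℕ → Fin r) → ℝ≥0∞} (hg : Measurable g) :
    ∫⁻ ξ in A, g (shift k ξ) ∂μ = μ A * ∫⁻ ξ, g ξ ∂μ := by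
  rw [← lintegral_map hg (measurable_shift k), hμ.map_restrict_shift hA, lintegral_smul_measure,
    smul_eq_mul]

lemma lintegral_eq_tsum_setLIntegral_waitTime_eq {w : List (Fin r)} (hw : Ew μ w ≠ ⊤)
    (F : (ℕ → Fin r) → ℝ≥0∞) :
    ∫⁻ ξ, F ξ ∂μ = ∑' k : ℕ, ∫⁻ ξ in {ξ | waitTime w ξ = k}, F ξ ∂μ := by
  have hae : ∀ᵐ ξ ∂μ, ξ ∈ ⋃ k : ℕ, {ξ | waitTime w ξ = k} :=
    (ae_lt_top (measurable_waitTime w) hw).mono fun ξ h =>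
      Set.mem_iUnion.2 (exists_waitTime_eq_natCast h.ne)
  calc ∫⁻ ξ, F ξ ∂μ = ∫⁻ ξ in ⋃ k : ℕ, {ξ | waitTime w ξ = k}, F ξ ∂μ := by
        rw [Measure.restrict_eq_self_of_ae_mem hae]
    _ = _ := lintegral_iUnion (fun k => measurable_waitTime w (measurableSet_singleton _))
        ((pairwise_disjoint_fiber (waitTime w)).comp_of_injective Nat.cast_injective) F

lemma length_le_lintegral_waitTime [IsProbabilityMeasure μ] (w : List (Fin r))
    (f : (ℕ → Fin r) → ℕ → Fin r) :
    (w.length : ℝ≥0∞) ≤ ∫⁻ ξ, waitTime w (f ξ) ∂μ := by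
  simpa using lintegral_mono (μ := μ) fun ξ => length_le_waitTime w (f ξ)

theorem IsIIDWith.Ew_append_add_length [IsProbabilityMeasure μ] (hμ : IsIIDWith p μ)
    (w₁ w₂ : List (Fin r)) :
    Ew μ (w₁ ++ w₂) + w₁.length = Ew μ w₁ + ∫⁻ η, waitTime (w₁ ++ w₂) (prepend w₁ η) ∂μ := by
  by_cases hfin : Ew μ w₁ = ⊤
  · have h : Ew μ (w₁ ++ w₂) = ⊤ :=
      top_unique (hfin ▸ lintegral_mono fun ξ => waitTime_le_waitTime_append w₁ w₂ ξ)
    simp [hfin, h]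
  set A : ℕ → Set (ℕ → Fin r) := fun k => {ξ | waitTime w₁ ξ = k}
  set C := ∫⁻ η, waitTime (w₁ ++ w₂) (prepend w₁ η) ∂μ
  have hsplit := lintegral_eq_tsum_setLIntegral_waitTime_eq hfin
  have hAmeas : ∀ k, MeasurableSet (A k) := fun k =>
    measurable_waitTime w₁ (measurableSet_singleton _)
  have hsum : ∑' k, μ (A k) = 1 := by
    simpa [setLIntegral_one] using (hsplit 1).symm
  calc Ew μ (w₁ ++ w₂) + w₁.length
      = ∫⁻ ξ, (waitTime (w₁ ++ w₂) ξ + w₁.length) ∂μ := by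
        rw [lintegral_add_right _ measurable_const, lintegral_const, measure_univ, mul_one, Ew]
    _ = ∑' k : ℕ, ∫⁻ ξ in A k, (k + waitTime (w₁ ++ w₂) (prepend w₁ (shift k ξ))) ∂μ := by
        rw [hsplit]
        exact tsum_congr fun k => setLIntegral_congr_fun (hAmeas k) fun ξ hξ =>
          waitTime_append_add_length hξ
    _ = ∑' k : ℕ, (k * μ (A k) + μ (A k) * C) := by
        refine tsum_congr fun k => ?_
        rw [lintegral_add_left measurable_const, setLIntegral_const,
          hμ.setLIntegral_comp_shift (A := A k) (fun ξ η h => waitTime_eq_natCast_congr h)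
            (g := fun η => waitTime (w₁ ++ w₂) (prepend w₁ η))
            ((measurable_waitTime _).comp (measurable_prepend w₁))]
    _ = Ew μ w₁ + C := by
        rw [ENNReal.tsum_add, ENNReal.tsum_mul_right, hsum, one_mul, Ew, hsplit]
        exact congrArg (· + C) (tsum_congr fun k => by
          rw [setLIntegral_congr_fun (hAmeas k) fun ξ hξ => hξ, setLIntegral_const])

end WordOccurrence

open WordOccurrence in
theorem statement_4_general {r : ℕ} (p : Fin r → ℝ≥0∞)
    (μ : Measure (ℕ → Fin r)) [IsProbabilityMeasure μ]
    (hiid : ∀ (m : ℕ) (f : ℕ → Fin r),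
      μ {ξ | ∀ i < m, ξ i = f i} = ∏ i ∈ Finset.range m, p (f i))
    (w w₁ w₂ : List (Fin r)) (h : w = w₁ ++ w₂) :
    Ew μ w = condEw μ w w₁ + Ew μ w₁ := by
  subst h
  have hμ : IsIIDWith p μ := hiid
  have hle : (w₁.length : ℝ≥0∞) ≤ ∫⁻ η, waitTime (w₁ ++ w₂) (prepend w₁ η) ∂μ :=
    (Nat.cast_le.2 (by simp)).trans (length_le_lintegral_waitTime _ _)
  refine (ENNReal.add_left_inj (ENNReal.natCast_ne_top w₁.length)).1 ?_
  rw [hμ.Ew_append_add_length, condEw, add_right_comm, tsub_add_cancel_of_le hle,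
    add_comm]

theorem statement_4 {r : ℕ} (hr : 2 ≤ r) (p : Fin r → ℝ≥0∞)
    (hp1 : ∑ x, p x = 1) (hpos : ∀ x, 0 < p x)
    (μ : Measure (ℕ → Fin r)) [IsProbabilityMeasure μ]
    (hiid : ∀ (m : ℕ) (f : ℕ → Fin r),
      μ {ξ | ∀ i < m, ξ i = f i} = ∏ i ∈ Finset.range m, p (f i))
    (w w₁ w₂ : List (Fin r)) (h : w = w₁ ++ w₂) :
    Ew μ w = condEw μ w w₁ + Ew μ w₁ :=
  statement_4_general p μ hiid w w₁ w₂ h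
end

section
/- For every finite word w of length n ≥ 1, E(w) = E(w[1,n−1]) + 1 + Σ_{y ≠ w(n)} p(y) E(w | w[1,n−1]y), where w[1,n−1] is the prefix of w of length n−1 (the empty word if n = 1). -/
open MeasureTheory ENNReal

/-!
Write `w = u a` and `K = T_u`. Any occurrence of `w` ends strictly after `K`, and the event
`{K = k}` depends only on `X₀, …, X_{k-1}`, hence is independent of the shifted sequence
`(X_k, X_{k+1}, …)`. On `{K = k, X_k = y}` the sequence seen from position `k - |u|` is the word
`u y` followed by a fresh copy of `X`, so `T_w = (k - |u|) + T_w(u y X')`; for `y = a` this still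
holds, both sides being `k + 1`. Averaging over `y` and then over `k` gives
`E(w) = Σ_k P(K = k) (k + 1 + Σ_y p(y) E(w | u y))`, in which the term `y = a` vanishes because
`E(w | w) = 0`. If `K = ∞` with positive probability, both sides are infinite.
-/

open Function

theorem lintegral_eq_tsum_setLIntegral {Ω ι : Type*} [MeasurableSpace Ω] [Countable ι]
    {μ : Measure Ω} {s : ι → Set Ω} (hs : ∀ i, MeasurableSet (s i))
    (hd : Pairwise (Disjoint on s)) (hcov : ∀ᵐ x ∂μ, ∃ i, x ∈ s i) (f : Ω → ℝ≥0∞) :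
    ∫⁻ x, f x ∂μ = ∑' i, ∫⁻ x in s i, f x ∂μ := by
  rw [← lintegral_iUnion hs hd, Measure.restrict_congr_set (t := Set.univ), Measure.restrict_univ]
  exact Filter.eventuallyEq_univ.2 (by simp_rw [← Set.mem_iUnion] at hcov; exact hcov)

theorem tsum_measure_eq_one {Ω ι : Type*} [MeasurableSpace Ω] [Countable ι]
    {μ : Measure Ω} [IsProbabilityMeasure μ] {s : ι → Set Ω} (hs : ∀ i, MeasurableSet (s i))
    (hd : Pairwise (Disjoint on s)) (hcov : ∀ᵐ x ∂μ, ∃ i, x ∈ s i) :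
    ∑' i, μ (s i) = 1 := by
  simpa using (lintegral_eq_tsum_setLIntegral hs hd hcov 1).symm

section IIDSequence

variable {α : Type*}

def prefixCylinder (m : ℕ) (f : ℕ → α) : Set (ℕ → α) := {ξ | ∀ i < m, ξ i = f i}

def prefixCylinders (α : Type*) : Set (Set (ℕ → α)) := {S | ∃ m f, S = prefixCylinder m f}

def shift (m : ℕ) (ξ : ℕ → α) : ℕ → α := fun j => ξ (m + j)

def DependsOnPrefix (S : Set (ℕ → α)) (m : ℕ) : Prop :=
  ∀ ξ η : ℕ → α, (∀ i < m, ξ i = η i) → ξ ∈ S → η ∈ S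

def IsIIDLaw [MeasurableSpace α] (μ : Measure (ℕ → α)) (p : α → ℝ≥0∞) : Prop :=
  ∀ m f, μ (prefixCylinder m f) = ∏ i ∈ Finset.range m, p (f i)

def prefixOf (m : ℕ) (ξ : ℕ → α) : Fin m → α := fun i => ξ i

@[simp]
theorem shift_apply (m : ℕ) (ξ : ℕ → α) (j : ℕ) : shift m ξ j = ξ (m + j) := rfl

theorem shift_shift (a b : ℕ) (ξ : ℕ → α) : shift a (shift b ξ) = shift (b + a) ξ := by
  funext j
  simp [Nat.add_assoc]

theorem preimage_prefixOf_singleton (m : ℕ) (ξ : ℕ → α) :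
    prefixOf m ⁻¹' {prefixOf m ξ} = prefixCylinder m ξ := by
  ext η
  simp [prefixOf, prefixCylinder, funext_iff, Fin.forall_iff]

theorem DependsOnPrefix.eq_preimage_image {S : Set (ℕ → α)} {m : ℕ} (hS : DependsOnPrefix S m) :
    S = prefixOf m ⁻¹' (prefixOf m '' S) := by
  refine (Set.subset_preimage_image _ _).antisymm ?_
  rintro η ⟨ξ, hξ, hξη⟩
  refine hS ξ η (fun i hi => ?_) hξ
  exact congrFun hξη ⟨i, hi⟩

theorem prefixCylinder_inter_shift_preimage (m m' : ℕ) (f f' : ℕ → α) :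
    prefixCylinder m f ∩ shift m ⁻¹' prefixCylinder m' f'
      = prefixCylinder (m + m') (fun j => if j < m then f j else f' (j - m)) := by
  ext ξ
  simp only [prefixCylinder, Set.mem_inter_iff, Set.mem_preimage, Set.mem_ofPred_eq, shift_apply]
  constructor
  · rintro ⟨hf, hf'⟩ j hj
    split_ifs with hjm
    · exact hf j hjm
    · simpa [Nat.add_sub_cancel' (not_lt.1 hjm)] using hf' (j - m) (by omega)
  · intro h
    refine ⟨fun i hi => by simpa [hi] using h i (by omega), fun i hi => ?_⟩
    simpa using h (m + i) (by omega)

theorem isPiSystem_prefixCylinders : IsPiSystem (prefixCylinders α) := by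
  have key : ∀ {m m' : ℕ} {f f' : ℕ → α}, m ≤ m' →
      (prefixCylinder m f ∩ prefixCylinder m' f').Nonempty →
      prefixCylinder m f ∩ prefixCylinder m' f' = prefixCylinder m' f' := by
    rintro m m' f f' hmm' ⟨ξ, hξ, hξ'⟩
    refine Set.inter_eq_self_of_subset_right fun η hη i hi => ?_
    rw [hη i (hi.trans_le hmm'), ← hξ' i (hi.trans_le hmm'), hξ i hi]
  rintro _ ⟨m, f, rfl⟩ _ ⟨m', f', rfl⟩ hne
  rcases le_total m m' with h | h
  · exact ⟨m', f', key h hne⟩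
  · rw [Set.inter_comm] at hne ⊢
    exact ⟨m, f, key h hne⟩

theorem prefixCylinder_one (a : α) : prefixCylinder 1 (fun _ => a) = {η | η 0 = a} := by
  ext η
  simp [prefixCylinder]

theorem DependsOnPrefix.measurableSet_generateFrom [Countable α] {S : Set (ℕ → α)} {m : ℕ}
    (hS : DependsOnPrefix S m) : MeasurableSet[.generateFrom (prefixCylinders α)] S := by
  rw [hS.eq_preimage_image, ← Set.biUnion_preimage_singleton]
  refine .biUnion (Set.to_countable _) ?_
  rintro _ ⟨ξ, -, rfl⟩
  rw [preimage_prefixOf_singleton]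
  exact .basic _ ⟨m, ξ, rfl⟩

variable [MeasurableSpace α]

theorem measurable_shift (m : ℕ) : Measurable (shift (α := α) m) :=
  measurable_pi_lambda _ fun j => measurable_pi_apply (m + j)

variable [MeasurableSingletonClass α] [Countable α]

theorem measurable_comp_head_shift {β : Type*} [MeasurableSpace β] {F : α → (ℕ → α) → β}
    (hF : ∀ a, Measurable (F a)) : Measurable fun η => F (η 0) (shift 1 η) :=
  (measurable_from_prod_countable_left (f := fun q => F q.2 q.1) hF).comp
    ((measurable_shift 1).prodMk (measurable_pi_apply 0))

theorem measurableSet_prefixCylinder (m : ℕ) (f : ℕ → α) : MeasurableSet (prefixCylinder m f) := by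
  simp only [prefixCylinder, Set.ofPred_forall]
  exact .iInter fun i => .iInter fun _ => measurableSet_eq_fun (measurable_pi_apply i) measurable_const

theorem pi_eq_generateFrom_prefixCylinders :
    (MeasurableSpace.pi : MeasurableSpace (ℕ → α)) = .generateFrom (prefixCylinders α) := by
  refine le_antisymm (iSup_le fun i => ?_) (MeasurableSpace.generateFrom_le ?_)
  · rw [MeasurableSpace.comap_le_iff_le_map]
    intro s _
    refine DependsOnPrefix.measurableSet_generateFrom (m := i + 1) fun ξ η h hξ => ?_
    simpa [← h i (Nat.lt_succ_self i)] using hξ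
  · rintro _ ⟨m, f, rfl⟩
    exact measurableSet_prefixCylinder m f

theorem DependsOnPrefix.measurableSet {S : Set (ℕ → α)} {m : ℕ} (hS : DependsOnPrefix S m) :
    MeasurableSet S :=
  (pi_eq_generateFrom_prefixCylinders (α := α)).ge _ hS.measurableSet_generateFrom

variable {μ : Measure (ℕ → α)} [IsProbabilityMeasure μ] {p : α → ℝ≥0∞}

theorem IsIIDLaw.map_shift_restrict_prefixCylinder (hμ : IsIIDLaw μ p) (m : ℕ) (f : ℕ → α) :
    (μ.restrict (prefixCylinder m f)).map (shift m) = μ (prefixCylinder m f) • μ := by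
  have hshift := measurable_shift (α := α) m
  refine ext_of_generate_finite _ pi_eq_generateFrom_prefixCylinders isPiSystem_prefixCylinders
    ?_ ?_
  · rintro _ ⟨m', f', rfl⟩
    rw [Measure.map_apply hshift (measurableSet_prefixCylinder m' f'),
      Measure.restrict_apply (hshift (measurableSet_prefixCylinder m' f')), Set.inter_comm,
      prefixCylinder_inter_shift_preimage, Measure.smul_apply, smul_eq_mul, hμ, hμ, hμ,
      Finset.prod_range_add]
    congr 1
    · exact Finset.prod_congr rfl fun i hi => by simp [Finset.mem_range.1 hi]
    · exact Finset.prod_congr rfl fun i _ => by simp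
  · simp [Measure.map_apply hshift MeasurableSet.univ]

theorem IsIIDLaw.map_shift_restrict (hμ : IsIIDLaw μ p) {S : Set (ℕ → α)} {m : ℕ}
    (hS : DependsOnPrefix S m) : (μ.restrict S).map (shift m) = μ S • μ := by
  -- `S` is the countable disjoint union of the length-`m` cylinders through its points.
  have hcyl : ∀ g ∈ prefixOf m '' S, MeasurableSet (prefixOf m ⁻¹' {g}) := by
    rintro _ ⟨ξ, -, rfl⟩
    rw [preimage_prefixOf_singleton]
    exact measurableSet_prefixCylinder m ξ
  have hsum : ∀ ν : Measure (ℕ → α),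
      ν S = ∑' g : prefixOf m '' S, ν (prefixOf m ⁻¹' {g.1}) := fun ν => by
    rw [tsum_measure_preimage_singleton (Set.to_countable _) hcyl, ← hS.eq_preimage_image]
  ext B hB
  have hB' := measurable_shift m hB
  rw [Measure.map_apply (measurable_shift m) hB, Measure.restrict_apply hB', Set.inter_comm,
    ← Measure.restrict_apply hS.measurableSet, Measure.smul_apply, smul_eq_mul, hsum, hsum μ,
    ← ENNReal.tsum_mul_right]
  refine tsum_congr ?_
  rintro ⟨_, ξ, -, rfl⟩
  rw [preimage_prefixOf_singleton, Measure.restrict_apply (measurableSet_prefixCylinder m ξ),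
    Set.inter_comm, ← Measure.restrict_apply hB', ← Measure.map_apply (measurable_shift m) hB,
    hμ.map_shift_restrict_prefixCylinder, Measure.smul_apply, smul_eq_mul]

theorem IsIIDLaw.setLIntegral_comp_shift (hμ : IsIIDLaw μ p) {S : Set (ℕ → α)} {m : ℕ}
    (hS : DependsOnPrefix S m) {g : (ℕ → α) → ℝ≥0∞} (hg : Measurable g) :
    ∫⁻ ξ in S, g (shift m ξ) ∂μ = μ S * ∫⁻ η, g η ∂μ := by
  rw [← lintegral_map hg (measurable_shift m), hμ.map_shift_restrict hS, lintegral_smul_measure,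
    smul_eq_mul]

theorem IsIIDLaw.lintegral_comp_head_shift (hμ : IsIIDLaw μ p) {F : α → (ℕ → α) → ℝ≥0∞}
    (hF : ∀ a, Measurable (F a)) :
    ∫⁻ η, F (η 0) (shift 1 η) ∂μ = ∑' a, p a * ∫⁻ η, F a η ∂μ := by
  have hhead : ∀ a : α, DependsOnPrefix {η | η 0 = a} 1 := fun a ξ η h hξ =>
    (h 0 one_pos).symm.trans hξ
  rw [lintegral_eq_tsum_setLIntegral (fun a => (hhead a).measurableSet)
    (fun a b hab => Set.disjoint_left.2 fun η ha hb => hab (ha.symm.trans hb))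
    (.of_forall fun η => ⟨η 0, rfl⟩)]
  refine tsum_congr fun a => ?_
  rw [setLIntegral_congr_fun (hhead a).measurableSet (g := fun η => F a (shift 1 η))
    fun η hη => by rw [hη], hμ.setLIntegral_comp_shift (hhead a) (hF a), ← prefixCylinder_one,
    hμ, Finset.prod_range_one]

end IIDSequence

section WaitingTime

variable {r : ℕ}

def EndsAt (w : List (Fin r)) (ξ : ℕ → Fin r) (k : ℕ) : Prop :=
  w.length ≤ k ∧ ∀ j : ℕ, (hj : j < w.length) → ξ (k - w.length + j) = w.get ⟨j, hj⟩

variable {u w v : List (Fin r)} {ξ η : ℕ → Fin r} {k m : ℕ}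

theorem waitTime_eq_biInf (w : List (Fin r)) (ξ : ℕ → Fin r) :
    waitTime w ξ = ⨅ (k) (_ : EndsAt w ξ k), (k : ℝ≥0∞) :=
  le_antisymm (le_iInf₂ fun k hk => sInf_le ⟨k, rfl, hk⟩)
    (le_sInf fun _ ⟨k, hk, hk'⟩ => hk ▸ iInf₂_le k hk')

theorem waitTime_le (h : EndsAt w ξ k) : waitTime w ξ ≤ k :=
  (waitTime_eq_biInf w ξ).trans_le (iInf₂_le k h)

theorem le_waitTime {t : ℝ≥0∞} (h : ∀ k, EndsAt w ξ k → t ≤ k) : t ≤ waitTime w ξ :=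
  (le_iInf₂ h).trans_eq (waitTime_eq_biInf w ξ).symm

theorem length_le_waitTime (w : List (Fin r)) (ξ : ℕ → Fin r) :
    (w.length : ℝ≥0∞) ≤ waitTime w ξ :=
  le_waitTime fun _ hk => by exact_mod_cast hk.1

theorem waitTime_eq_natCast_iff : waitTime w ξ = k ↔ EndsAt w ξ k ∧ ∀ m < k, ¬EndsAt w ξ m := by
  classical
  by_cases h : ∃ k, EndsAt w ξ k
  · have hfind : waitTime w ξ = Nat.find h :=
      le_antisymm (waitTime_le (Nat.find_spec h))
        (le_waitTime fun k hk => by exact_mod_cast Nat.find_min' h hk)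
    rw [hfind, Nat.cast_inj, Nat.find_eq_iff]
  · have htop : waitTime w ξ = ⊤ := top_unique (le_waitTime fun k hk => (h ⟨k, hk⟩).elim)
    simp only [htop, ENNReal.top_ne_natCast, false_iff]
    exact fun hk => h ⟨k, hk.1⟩

theorem waitTime_eq_top_or_exists (w : List (Fin r)) (ξ : ℕ → Fin r) :
    waitTime w ξ = ⊤ ∨ ∃ k : ℕ, waitTime w ξ = k := by
  classical
  by_cases h : ∃ k, EndsAt w ξ k
  · refine .inr ⟨Nat.find h, waitTime_eq_natCast_iff.2 ⟨Nat.find_spec h, fun m => Nat.find_min h⟩⟩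
  · exact .inl (top_unique (le_waitTime fun k hk => (h ⟨k, hk⟩).elim))

theorem endsAt_congr (h : ∀ i < k, ξ i = η i) : EndsAt w ξ k ↔ EndsAt w η k := by
  refine and_congr_right fun hk => forall_congr' fun j => forall_congr' fun hj => ?_
  rw [h _ (by omega)]

theorem dependsOnPrefix_endsAt (w : List (Fin r)) (k : ℕ) :
    DependsOnPrefix {ξ | EndsAt w ξ k} k :=
  fun _ _ h => (endsAt_congr h).1

theorem dependsOnPrefix_waitTime_eq (w : List (Fin r)) (k : ℕ) :
    DependsOnPrefix {ξ | waitTime w ξ = k} k := by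
  intro ξ η h hξ
  simp only [Set.mem_ofPred_eq, waitTime_eq_natCast_iff] at hξ ⊢
  exact ⟨(endsAt_congr h).1 hξ.1,
    fun m hm hη => hξ.2 m hm ((endsAt_congr fun i hi => h i (by omega)).2 hη)⟩

theorem measurable_waitTime (w : List (Fin r)) : Measurable (waitTime w) := by
  classical
  have : waitTime w = fun ξ => ⨅ k : ℕ, if EndsAt w ξ k then (k : ℝ≥0∞) else ⊤ := by
    funext ξ
    simp_rw [waitTime_eq_biInf, iInf_eq_if]
  rw [this]
  exact .iInf fun k =>
    Measurable.ite (dependsOnPrefix_endsAt w k).measurableSet measurable_const measurable_const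

theorem measurable_prepend (v : List (Fin r)) : Measurable (prepend v) := by
  refine measurable_pi_lambda _ fun n => ?_
  by_cases h : n < v.length
  · simp only [prepend, h, dif_pos, measurable_const]
  · simpa only [prepend, h, dif_neg, not_false_iff] using measurable_pi_apply _

theorem EndsAt.concat (h : EndsAt u ξ k) : EndsAt (u ++ [ξ k]) ξ (k + 1) := by
  have hk := h.1
  refine ⟨by simpa using hk, fun j hj => ?_⟩
  simp only [List.length_append, List.length_singleton] at hj ⊢
  rcases Nat.lt_succ_iff_lt_or_eq.1 hj with hj | rfl
  · simpa [List.getElem_append_left hj, show k + 1 - (u.length + 1) + j = k - u.length + j by omega]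
      using h.2 j hj
  · simp [Nat.sub_add_cancel hk]

theorem EndsAt.of_concat {a : Fin r} (h : EndsAt (u ++ [a]) ξ m) : EndsAt u ξ (m - 1) := by
  have hm : u.length + 1 ≤ m := by simpa using h.1
  refine ⟨by omega, fun j hj => ?_⟩
  simpa [List.getElem_append_left hj, show m - (u.length + 1) + j = m - 1 - u.length + j by omega]
    using h.2 j (by simp; omega)

theorem waitTime_le_waitTime_concat (u : List (Fin r)) (a : Fin r) (ξ : ℕ → Fin r) :
    waitTime u ξ ≤ waitTime (u ++ [a]) ξ :=
  le_waitTime fun m hm => (waitTime_le hm.of_concat).trans (by exact_mod_cast m.sub_le 1)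

theorem endsAt_shift_iff {c t : ℕ} :
    EndsAt w (shift c ξ) t ↔ w.length ≤ t ∧ EndsAt w ξ (c + t) := by
  simp only [EndsAt, shift_apply]
  refine ⟨fun ⟨ht, h⟩ => ⟨ht, by omega, fun j hj => ?_⟩, fun ⟨ht, _, h⟩ => ⟨ht, fun j hj => ?_⟩⟩
  · rw [← h j hj]; congr 1; omega
  · rw [← h j hj]; congr 1; omega

theorem waitTime_eq_waitTime_shift_add {c : ℕ} (h : ∀ m, EndsAt w ξ m → c + w.length ≤ m) :
    waitTime w ξ = waitTime w (shift c ξ) + c := by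
  apply le_antisymm
  · obtain htop | ⟨t, ht⟩ := waitTime_eq_top_or_exists w (shift c ξ)
    · simp [htop]
    · rw [ht, ← Nat.cast_add, add_comm t]
      exact waitTime_le (endsAt_shift_iff.1 (waitTime_eq_natCast_iff.1 ht).1).2
  · refine le_waitTime fun m hm => ?_
    have hcm := h m hm
    have hshift : EndsAt w (shift c ξ) (m - c) :=
      endsAt_shift_iff.2 ⟨by omega, by rwa [Nat.add_sub_cancel' (by omega)]⟩
    calc waitTime w (shift c ξ) + c ≤ ((m - c : ℕ) : ℝ≥0∞) + c := by
          gcongr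
          exact waitTime_le hshift
      _ = m := by rw [← Nat.cast_add, Nat.sub_add_cancel (by omega)]

theorem prepend_shift_eq_shift {n : ℕ} (h : EndsAt v ξ n) :
    prepend v (shift n ξ) = shift (n - v.length) ξ := by
  funext i
  by_cases hi : i < v.length
  · simp [prepend, hi, h.2 i hi]
  · simp only [prepend, hi, dif_neg, not_false_iff, shift_apply]
    congr 1
    have := h.1
    omega

theorem waitTime_prepend_self (w : List (Fin r)) (η : ℕ → Fin r) :
    waitTime w (prepend w η) = w.length :=
  le_antisymm (waitTime_le ⟨le_rfl, fun j hj => by simp [prepend, hj]⟩) (length_le_waitTime w _)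

theorem waitTime_concat_eq_of_waitTime_eq (hk : waitTime u ξ = k) (a : Fin r) :
    waitTime (u ++ [a]) ξ
      = waitTime (u ++ [a]) (prepend (u ++ [ξ k]) (shift (k + 1) ξ)) + (k - u.length : ℕ) := by
  obtain ⟨hu, hmin⟩ := waitTime_eq_natCast_iff.1 hk
  have hlen : k + 1 - (u ++ [ξ k]).length = k - u.length := by simp
  rw [prepend_shift_eq_shift hu.concat, hlen]
  refine waitTime_eq_waitTime_shift_add fun m hm => ?_
  have hku := hu.1
  have hmu := hm.1
  have hkm : k ≤ m - 1 := not_lt.1 fun hlt => hmin (m - 1) hlt hm.of_concat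
  simp only [List.length_append, List.length_singleton] at hmu ⊢
  omega

end WaitingTime

section ExpectedWaitingTime

variable {r : ℕ} {p : Fin r → ℝ≥0∞} {μ : Measure (ℕ → Fin r)} [IsProbabilityMeasure μ]

theorem lintegral_waitTime_prepend {w v : List (Fin r)} (h : v.length ≤ w.length) :
    ∫⁻ η, waitTime w (prepend v η) ∂μ = v.length + condEw μ w v := by
  refine (add_tsub_cancel_of_le ?_).symm
  calc (v.length : ℝ≥0∞) ≤ ∫⁻ _, (w.length : ℝ≥0∞) ∂μ := by simpa using h
    _ ≤ ∫⁻ η, waitTime w (prepend v η) ∂μ := lintegral_mono fun η => length_le_waitTime w _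

theorem condEw_self (w : List (Fin r)) : condEw μ w w = 0 := by
  simp [condEw, waitTime_prepend_self]

theorem IsIIDLaw.setLIntegral_waitTime_concat (hμ : IsIIDLaw μ p) (hp : ∑ y, p y = 1)
    (u : List (Fin r)) (a : Fin r) (k : ℕ) :
    ∫⁻ ξ in {ξ | waitTime u ξ = k}, waitTime (u ++ [a]) ξ ∂μ
      = μ {ξ | waitTime u ξ = k} * (k + 1 + ∑ y, p y * condEw μ (u ++ [a]) (u ++ [y])) := by
  have hA := dependsOnPrefix_waitTime_eq u k
  set G : (ℕ → Fin r) → ℝ≥0∞ := fun η => waitTime (u ++ [a]) (prepend (u ++ [η 0]) (shift 1 η))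
  have hmeas : ∀ y, Measurable fun η => waitTime (u ++ [a]) (prepend (u ++ [y]) η) := fun y =>
    (measurable_waitTime _).comp (measurable_prepend _)
  have hprepend : ∀ y, ∫⁻ η, waitTime (u ++ [a]) (prepend (u ++ [y]) η) ∂μ
      = u.length + 1 + condEw μ (u ++ [a]) (u ++ [y]) := fun y => by
    rw [lintegral_waitTime_prepend (by simp)]
    simp
  have hG : ∫⁻ η, G η ∂μ = u.length + 1 + ∑ y, p y * condEw μ (u ++ [a]) (u ++ [y]) := by
    simp_rw [G, hμ.lintegral_comp_head_shift hmeas, tsum_fintype, hprepend, mul_add,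
      Finset.sum_add_distrib, ← Finset.sum_mul, hp, one_mul]
  rw [setLIntegral_congr_fun hA.measurableSet fun ξ hξ => waitTime_concat_eq_of_waitTime_eq hξ a,
    lintegral_add_right _ measurable_const, setLIntegral_const]
  have hshift : ∀ ξ : ℕ → Fin r,
      waitTime (u ++ [a]) (prepend (u ++ [ξ k]) (shift (k + 1) ξ)) = G (shift k ξ) := by
    simp [G, shift_shift]
  simp_rw [hshift]
  rw [hμ.setLIntegral_comp_shift hA (measurable_comp_head_shift hmeas), hG]
  rcases Set.eq_empty_or_nonempty {ξ | waitTime u ξ = k} with hempty | ⟨ξ, hξ⟩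
  · simp [hempty]
  obtain ⟨c, rfl⟩ : ∃ c, k = u.length + c :=
    Nat.exists_eq_add_of_le (by exact_mod_cast hξ ▸ length_le_waitTime u ξ)
  rw [Nat.add_sub_cancel_left]
  push_cast
  ring

theorem IsIIDLaw.Ew_concat (hμ : IsIIDLaw μ p) (hp : ∑ y, p y = 1) (u : List (Fin r)) (a : Fin r) :
    Ew μ (u ++ [a]) = Ew μ u + 1 + ∑ y, p y * condEw μ (u ++ [a]) (u ++ [y]) := by
  set D := ∑ y, p y * condEw μ (u ++ [a]) (u ++ [y])
  by_cases hfin : μ {ξ | waitTime u ξ = ⊤} = 0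
  · set A : ℕ → Set (ℕ → Fin r) := fun k => {ξ | waitTime u ξ = k}
    have hAm : ∀ k, MeasurableSet (A k) := fun k => (dependsOnPrefix_waitTime_eq u k).measurableSet
    have hAd : Pairwise (Disjoint on A) := fun k l hkl =>
      Set.disjoint_left.2 fun ξ hk hl => hkl (by exact_mod_cast hk.symm.trans hl)
    have hAcov : ∀ᵐ ξ ∂μ, ∃ k, ξ ∈ A k := by
      refine ae_iff.2 (measure_mono_null (fun ξ hξ => ?_) hfin)
      exact (waitTime_eq_top_or_exists u ξ).resolve_right hξ
    have hsplit := lintegral_eq_tsum_setLIntegral hAm hAd hAcov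
    calc Ew μ (u ++ [a]) = ∑' k : ℕ, μ (A k) * (k + 1 + D) :=
          (hsplit _).trans (tsum_congr fun k => hμ.setLIntegral_waitTime_concat hp u a k)
      _ = ∑' k : ℕ, μ (A k) * k + (∑' k, μ (A k)) * (1 + D) := by
          rw [← ENNReal.tsum_mul_right, ← ENNReal.tsum_add]
          exact tsum_congr fun k => by ring
      _ = Ew μ u + 1 + D := by
          rw [tsum_measure_eq_one hAm hAd hAcov, one_mul, ← add_assoc, Ew, hsplit]
          congr 2
          refine tsum_congr fun k => ?_
          rw [setLIntegral_congr_fun (hAm k) fun ξ hξ => hξ, setLIntegral_const, mul_comm]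
  · have hu : Ew μ u = ⊤ :=
      lintegral_eq_top_of_measure_eq_top_ne_zero (measurable_waitTime u).aemeasurable hfin
    have hua : Ew μ (u ++ [a]) = ⊤ :=
      top_unique (hu ▸ lintegral_mono fun ξ => waitTime_le_waitTime_concat u a ξ)
    simp [hu, hua]

end ExpectedWaitingTime

theorem statement_5_general {r : ℕ} (p : Fin r → ℝ≥0∞)
    (hp1 : ∑ x, p x = 1)
    (μ : Measure (ℕ → Fin r)) [IsProbabilityMeasure μ]
    (hiid : ∀ (m : ℕ) (f : ℕ → Fin r),
      μ {ξ | ∀ i < m, ξ i = f i} = ∏ i ∈ Finset.range m, p (f i))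
    (w : List (Fin r)) (hw : w ≠ []) :
    Ew μ w = Ew μ w.dropLast + 1 +
      ∑ y ∈ Finset.univ.filter (fun y => y ≠ w.getLast hw),
        p y * condEw μ w (w.dropLast ++ [y]) := by
  have key := IsIIDLaw.Ew_concat hiid hp1 w.dropLast (w.getLast hw)
  rw [List.dropLast_append_getLast hw] at key
  rw [key, Finset.sum_filter_of_ne]
  rintro y - hy rfl
  rw [List.dropLast_append_getLast hw, condEw_self, mul_zero] at hy
  exact hy rfl

theorem statement_5 {r : ℕ} (hr : 2 ≤ r) (p : Fin r → ℝ≥0∞)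
    (hp1 : ∑ x, p x = 1) (hpos : ∀ x, 0 < p x)
    (μ : Measure (ℕ → Fin r)) [IsProbabilityMeasure μ]
    (hiid : ∀ (m : ℕ) (f : ℕ → Fin r),
      μ {ξ | ∀ i < m, ξ i = f i} = ∏ i ∈ Finset.range m, p (f i))
    (w : List (Fin r)) (hw : w ≠ []) :
    Ew μ w = Ew μ w.dropLast + 1 +
      ∑ y ∈ Finset.univ.filter (fun y => y ≠ w.getLast hw),
        p y * condEw μ w (w.dropLast ++ [y]) :=
  statement_5_general p hp1 μ hiid w hw
end

section
/- Let w be a finite word of length n ≥ 1. For x ∈ X let w_x = w[1,n−1]x and let ŵ_x be the longest bifix of w_x. Then for every x ∈ X: p(x)E(w_x) = E(w[1,n−1]) + 1 − Σ_{y ≠ x} p(y)E(ŵ_y). -/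
/-!
Conway's formula: `E(u)` is the sum of `1 / p(s)` over the nonempty suffixes `s` of `u` that are
also prefixes of `u`. Before each letter a new gambler arrives with stake `1` and bets everything,
at fair odds, that the coming letters spell `u`. The gamblers' total capital minus the elapsed
time is a martingale, the capital stays bounded up to `T_u`, and at `T_u` exactly the gamblers
whose observed letters form a suffix of `u` that is also a prefix of `u` are still in the game.

The proper bifixes of `v y` are `ŵ_y` and the bifixes of `ŵ_y`, so `E(v y) = 1 / p(v y) + E(ŵ_y)`.
Averaging over `y` with weights `p(y)`, one more round of fair bets gives
`∑_y p(y) E(ŵ_y) = 1 + E(v) - 1 / p(v)`; removing the terms `y ≠ x` leaves `p(x) E(v x)`.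
-/

open MeasureTheory ENNReal

namespace WaitingTime

section List

variable {α : Type*}

@[simp] lemma rtake_length_self (l : List α) : l.rtake l.length = l := by
  simp [List.rtake]

lemma rtake_eq_rtake_of_suffix {b u : List α} (h : b <:+ u) {l : ℕ} (hl : l ≤ b.length) :
    u.rtake l = b.rtake l := by
  obtain ⟨t, rfl⟩ := h
  simp only [List.rtake, List.length_append]
  rw [show t.length + b.length - l = t.length + (b.length - l) by omega, List.drop_append]
  simp

lemma prefix_iff_prefix_of_prefix {s b u : List α} (hb : b <+: u) (hs : s.length ≤ b.length) :
    s <+: u ↔ s <+: b :=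
  ⟨fun h => List.prefix_of_prefix_length_le h hb hs, fun h => h.trans hb⟩

end List

variable {r : ℕ} {p : Fin r → ℝ≥0∞}

lemma ne_top_of_sum_eq_one (hp1 : ∑ y, p y = 1) (y : Fin r) : p y ≠ ⊤ :=
  ne_top_of_le_ne_top ENNReal.one_ne_top
    (hp1 ▸ Finset.single_le_sum (fun _ _ => zero_le) (Finset.mem_univ y))

lemma pword_append (p : Fin r → ℝ≥0∞) (s t : List (Fin r)) :
    pword p (s ++ t) = pword p s * pword p t := by
  simp [pword]

lemma pword_ne_zero (hp0 : ∀ y, p y ≠ 0) (s : List (Fin r)) : pword p s ≠ 0 := by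
  simpa [pword] using fun y _ => hp0 y

lemma mul_inv_pword_concat (s : List (Fin r)) {y : Fin r} (hy0 : p y ≠ 0) (hytop : p y ≠ ⊤) :
    p y * (pword p (s ++ [y]))⁻¹ = (pword p s)⁻¹ := by
  rw [pword_append, show pword p [y] = p y by simp [pword],
    ENNReal.mul_inv (.inr hytop) (.inr hy0), mul_left_comm, ENNReal.mul_inv_cancel hy0 hytop,
    mul_one]

/-- What a gambler betting on `u` holds after seeing the letters `s`: each bet on the next letter
of `u` is fair, so the stake `1` grows to `1 / p(s)` as long as `s` is a prefix of `u`. -/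
noncomputable def payoff (p : Fin r → ℝ≥0∞) (u s : List (Fin r)) : ℝ≥0∞ :=
  if s <+: u then (pword p s)⁻¹ else 0

@[simp] lemma payoff_nil (p : Fin r → ℝ≥0∞) (u : List (Fin r)) : payoff p u [] = 1 := by
  simp [payoff, pword]

@[simp] lemma payoff_self (p : Fin r → ℝ≥0∞) (u : List (Fin r)) :
    payoff p u u = (pword p u)⁻¹ := by
  simp [payoff]

lemma payoff_append_of_length_le (p : Fin r → ℝ≥0∞) {v s : List (Fin r)} (t : List (Fin r))
    (hs : s.length ≤ v.length) : payoff p (v ++ t) s = payoff p v s := by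
  simp only [payoff, prefix_iff_prefix_of_prefix (List.prefix_append v t) hs]

lemma sum_mul_payoff_concat (hp0 : ∀ y, p y ≠ 0) (hptop : ∀ y, p y ≠ ⊤)
    {u s : List (Fin r)} (hsu : s ≠ u) :
    ∑ y, p y * payoff p u (s ++ [y]) = payoff p u s := by
  classical
  by_cases hs : s <+: u
  · obtain ⟨t, rfl⟩ := hs
    obtain ⟨c, t, rfl⟩ := List.exists_cons_of_ne_nil (by simpa using hsu)
    have hpre : ∀ y, s ++ [y] <+: s ++ c :: t ↔ c = y := by simp [eq_comm]
    simp only [payoff, hpre, List.prefix_append, if_true, mul_ite, mul_zero]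
    rw [Finset.sum_ite_eq, if_pos (Finset.mem_univ c), mul_inv_pword_concat s (hp0 c) (hptop c)]
  · have hs' : ∀ y, ¬ s ++ [y] <+: u := fun y h => hs ((List.prefix_append s [y]).trans h)
    simp [payoff, hs, hs']

noncomputable def conway (p : Fin r → ℝ≥0∞) (u : List (Fin r)) : ℝ≥0∞ :=
  ∑ j ∈ Finset.range u.length, payoff p u (u.rtake (j + 1))

lemma conway_ne_top (hp0 : ∀ y, p y ≠ 0) (u : List (Fin r)) : conway p u ≠ ⊤ := by
  refine ENNReal.sum_ne_top.2 fun j _ => ?_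
  unfold payoff
  split_ifs
  · exact ENNReal.inv_ne_top.2 (pword_ne_zero hp0 _)
  · exact ENNReal.zero_ne_top

lemma sum_range_succ_payoff_rtake (p : Fin r → ℝ≥0∞) (v : List (Fin r)) :
    ∑ j ∈ Finset.range (v.length + 1), payoff p v (v.rtake j) = 1 + conway p v := by
  rw [Finset.sum_range_succ', add_comm, conway]
  simp

/-- Below the longest bifix `b` of `u`, the proper bifixes of `u` are exactly the bifixes of `b`. -/
lemma payoff_rtake_of_isLongestBifix {b u : List (Fin r)} (hb : IsLongestBifix b u) {l : ℕ}
    (hl : l < u.length) :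
    payoff p u (u.rtake l) = if l ≤ b.length then payoff p b (b.rtake l) else 0 := by
  obtain ⟨⟨-, hpre, hsuf⟩, hmax⟩ := hb
  have hlen : (u.rtake l).length = l := by simp [List.rtake]; omega
  split_ifs with hlb
  · rw [rtake_eq_rtake_of_suffix hsuf hlb]
    have hlen' : (b.rtake l).length ≤ b.length := by simp [List.rtake]
    simp only [payoff, prefix_iff_prefix_of_prefix hpre hlen']
  · have hnot : ¬ u.rtake l <+: u := fun h => by
      have := hmax _ ⟨fun he => by rw [← hlen, he] at hl; omega, h, List.drop_suffix _ _⟩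
      omega
    simp [payoff, hnot]

lemma conway_eq_inv_pword_add_conway {b u : List (Fin r)} (hb : IsLongestBifix b u) :
    conway p u = (pword p u)⁻¹ + conway p b := by
  have hbu : b.length < u.length :=
    lt_of_le_of_ne hb.1.2.1.length_le fun h => hb.1.1 (hb.1.2.1.eq_of_length h)
  obtain ⟨n, hn⟩ : ∃ n, u.length = n + 1 := ⟨u.length - 1, by omega⟩
  rw [conway, hn, Finset.sum_range_succ, ← hn, rtake_length_self, payoff_self, add_comm]
  congr 1
  have hfilter : (Finset.range n).filter (fun j => j + 1 ≤ b.length) = Finset.range b.length := by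
    ext j; simp; omega
  rw [conway, ← hfilter, Finset.sum_filter]
  exact Finset.sum_congr rfl fun j hj =>
    payoff_rtake_of_isLongestBifix hb (by simp at hj; omega)

lemma sum_mul_conway_concat (hp0 : ∀ y, p y ≠ 0) (hptop : ∀ y, p y ≠ ⊤) (v : List (Fin r)) :
    ∑ y, p y * conway p (v ++ [y]) =
      ∑ y, p y * (pword p (v ++ [y]))⁻¹ + ∑ j ∈ Finset.range v.length, payoff p v (v.rtake j) := by
  have hsplit : ∀ y, conway p (v ++ [y]) =
      ∑ j ∈ Finset.range v.length, payoff p v (v.rtake j ++ [y]) + (pword p (v ++ [y]))⁻¹ := by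
    intro y
    rw [conway, List.length_append, List.length_singleton, Finset.sum_range_succ,
      List.rtake_concat_succ, rtake_length_self, payoff_self]
    congr 1
    refine Finset.sum_congr rfl fun j hj => ?_
    rw [List.rtake_concat_succ, payoff_append_of_length_le]
    simp [List.rtake] at hj ⊢; omega
  have hfair : ∀ j ∈ Finset.range v.length,
      ∑ y, p y * payoff p v (v.rtake j ++ [y]) = payoff p v (v.rtake j) := by
    intro j hj
    refine sum_mul_payoff_concat hp0 hptop fun h => ?_
    have := congrArg List.length h
    simp [List.rtake] at this hj; omega
  simp only [hsplit, mul_add, Finset.sum_add_distrib, Finset.mul_sum]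
  rw [add_comm, Finset.sum_comm, Finset.sum_congr rfl hfair]

lemma sum_mul_conway_longestBifix (hp0 : ∀ y, p y ≠ 0) (hptop : ∀ y, p y ≠ ⊤)
    {v : List (Fin r)} {b : Fin r → List (Fin r)} (hb : ∀ y, IsLongestBifix (b y) (v ++ [y])) :
    ∑ y, p y * conway p (b y) = ∑ j ∈ Finset.range v.length, payoff p v (v.rtake j) := by
  have h := sum_mul_conway_concat hp0 hptop v
  simp only [conway_eq_inv_pword_add_conway (hb _), mul_add, Finset.sum_add_distrib] at h
  refine (ENNReal.add_right_inj (ENNReal.sum_ne_top.2 fun y _ => ?_)).1 h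
  exact ENNReal.mul_ne_top (hptop y) (ENNReal.inv_ne_top.2 (pword_ne_zero hp0 _))

def window (ξ : ℕ → Fin r) (i l : ℕ) : List (Fin r) := (List.range' i l).map ξ

@[simp] lemma length_window (ξ : ℕ → Fin r) (i l : ℕ) : (window ξ i l).length = l := by
  simp [window]

lemma window_succ (ξ : ℕ → Fin r) (i l : ℕ) : window ξ i (l + 1) = window ξ i l ++ [ξ (i + l)] := by
  simp [window, List.range'_concat]

lemma drop_window (ξ : ℕ → Fin r) (i l d : ℕ) :
    (window ξ i l).drop d = window ξ (i + d) (l - d) := by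
  simp [window, ← List.map_drop, List.drop_range']

lemma window_congr {ξ ξ' : ℕ → Fin r} {i l : ℕ} (h : ∀ n < i + l, ξ n = ξ' n) :
    window ξ i l = window ξ' i l :=
  List.map_congr_left fun n hn => h n (List.mem_range'_1.1 hn).2

def OccursAt (u : List (Fin r)) (ξ : ℕ → Fin r) (k : ℕ) : Prop :=
  u.length ≤ k ∧ window ξ (k - u.length) u.length = u

lemma occursAt_congr {u : List (Fin r)} {ξ ξ' : ℕ → Fin r} {k : ℕ}
    (h : ∀ n < k, ξ n = ξ' n) : OccursAt u ξ k ↔ OccursAt u ξ' k := by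
  unfold OccursAt
  constructor <;> rintro ⟨hk, hw⟩ <;> refine ⟨hk, ?_⟩
  · rwa [← window_congr fun n hn => h n (by omega)]
  · rwa [window_congr fun n hn => h n (by omega)]

lemma waitTime_eq_sInf (u : List (Fin r)) (ξ : ℕ → Fin r) :
    waitTime u ξ = sInf ((fun k : ℕ => (k : ℝ≥0∞)) '' {k | OccursAt u ξ k}) := by
  have hwin : ∀ k, window ξ (k - u.length) u.length = u ↔
      ∀ j (hj : j < u.length), ξ (k - u.length + j) = u.get ⟨j, hj⟩ := fun k => by
    rw [List.ext_get_iff]; simp [window]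
  unfold waitTime OccursAt
  congr 1
  ext t
  simp only [hwin, Set.mem_ofPred_eq, Set.mem_image]
  constructor
  · rintro ⟨k, rfl, hk⟩; exact ⟨k, hk, rfl⟩
  · rintro ⟨k, hk, rfl⟩; exact ⟨k, rfl, hk⟩

/-- The capital after `k` letters of the gamblers betting on `u`, one of whom joins at each time;
the `j`-th term is the one who has seen the last `j + 1` letters. -/
noncomputable def capital (p : Fin r → ℝ≥0∞) (u : List (Fin r)) (ξ : ℕ → Fin r) (k : ℕ) : ℝ≥0∞ :=
  ∑ j ∈ Finset.range k, payoff p u (window ξ (k - (j + 1)) (j + 1))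

lemma capital_congr {u : List (Fin r)} {ξ ξ' : ℕ → Fin r} {k : ℕ} (h : ∀ n < k, ξ n = ξ' n) :
    capital p u ξ k = capital p u ξ' k :=
  Finset.sum_congr rfl fun j hj => by
    rw [window_congr fun n hn => h n (by simp at hj; omega)]

lemma payoff_le (p : Fin r → ℝ≥0∞) (u s : List (Fin r)) :
    payoff p u s ≤ if s.length ≤ u.length then (pword p (u.take s.length))⁻¹ else 0 := by
  unfold payoff
  split_ifs with h₁ h₂
  · rw [← List.prefix_iff_eq_take.1 h₁]
  · exact absurd h₁.length_le h₂
  all_goals exact zero_le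

lemma capital_le (p : Fin r → ℝ≥0∞) (u : List (Fin r)) (ξ : ℕ → Fin r) (k : ℕ) :
    capital p u ξ k ≤ ∑ j ∈ Finset.range u.length, (pword p (u.take (j + 1)))⁻¹ :=
  calc capital p u ξ k
      ≤ ∑ j ∈ Finset.range k, if j + 1 ≤ u.length then (pword p (u.take (j + 1)))⁻¹ else 0 :=
        Finset.sum_le_sum fun j _ => by simpa using payoff_le p u (window ξ (k - (j + 1)) (j + 1))
    _ = ∑ j ∈ (Finset.range k).filter (· + 1 ≤ u.length), (pword p (u.take (j + 1)))⁻¹ :=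
        (Finset.sum_filter _ _).symm
    _ ≤ _ := Finset.sum_le_sum_of_subset fun j hj => by simp at hj ⊢; omega

lemma sum_inv_pword_take_ne_top (hp0 : ∀ y, p y ≠ 0) (u : List (Fin r)) :
    ∑ j ∈ Finset.range u.length, (pword p (u.take (j + 1)))⁻¹ ≠ ⊤ :=
  ENNReal.sum_ne_top.2 fun _ _ => ENNReal.inv_ne_top.2 (pword_ne_zero hp0 _)

lemma capital_of_occursAt {u : List (Fin r)} {ξ : ℕ → Fin r} {t : ℕ} (h : OccursAt u ξ t) :
    capital p u ξ t = conway p u := by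
  obtain ⟨hut, hwin⟩ := h
  have hlong : ∀ j ∈ Finset.range t, j ∉ Finset.range u.length →
      payoff p u (window ξ (t - (j + 1)) (j + 1)) = 0 := fun j _ hj => by
    have : ¬ window ξ (t - (j + 1)) (j + 1) <+: u := fun h => by
      have := h.length_le; simp at this hj; omega
    simp [payoff, this]
  rw [capital, ← Finset.sum_subset (Finset.range_subset_range.2 hut) hlong, conway]
  refine Finset.sum_congr rfl fun j hj => ?_
  simp only [Finset.mem_range] at hj
  rw [List.rtake, ← hwin, drop_window, length_window]
  congr 2 <;> omega

/-- Fairness of the whole game: before `u` has occurred, the next letter raises the expected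
capital by the stake of the newly arriving gambler. -/
lemma sum_mul_capital_update (hp0 : ∀ y, p y ≠ 0) (hptop : ∀ y, p y ≠ ⊤)
    {u : List (Fin r)} {ξ : ℕ → Fin r} {k : ℕ} (hk : ¬ OccursAt u ξ k) :
    ∑ y, p y * capital p u (Function.update ξ k y) (k + 1) = capital p u ξ k + 1 := by
  have hwin : ∀ y, ∀ j ≤ k, window (Function.update ξ k y) (k - j) (j + 1) =
      window ξ (k - j) j ++ [y] := fun y j hj => by
    rw [window_succ, show k - j + j = k by omega, Function.update_self]
    congr 1
    exact window_congr fun n hn => Function.update_of_ne (by omega) _ _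
  have hne : ∀ j ≤ k, window ξ (k - j) j ≠ u := fun j hj h => hk (by subst h; simpa [OccursAt])
  calc ∑ y, p y * capital p u (Function.update ξ k y) (k + 1)
      = ∑ j ∈ Finset.range (k + 1), ∑ y, p y * payoff p u (window ξ (k - j) j ++ [y]) := by
        simp only [capital, Finset.mul_sum]
        rw [Finset.sum_comm]
        refine Finset.sum_congr rfl fun j hj => Finset.sum_congr rfl fun y _ => ?_
        rw [Nat.add_sub_add_right, hwin y j (by simp at hj; omega)]
    _ = ∑ j ∈ Finset.range (k + 1), payoff p u (window ξ (k - j) j) :=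
        Finset.sum_congr rfl fun j hj =>
          sum_mul_payoff_concat hp0 hptop (hne j (by simp at hj; omega))
    _ = capital p u ξ k + 1 := by
        rw [Finset.sum_range_succ', capital]
        simp [window]

open Classical in
/-- `min (T_u ξ) k`. -/
noncomputable def stoppedTime (u : List (Fin r)) (ξ : ℕ → Fin r) : ℕ → ℕ
  | 0 => 0
  | k + 1 => if OccursAt u ξ (stoppedTime u ξ k) then stoppedTime u ξ k else k + 1

section StoppedTime

variable {u : List (Fin r)} {ξ : ℕ → Fin r}

lemma stoppedTime_succ_of_occursAt {k : ℕ} (h : OccursAt u ξ (stoppedTime u ξ k)) :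
    stoppedTime u ξ (k + 1) = stoppedTime u ξ k := by
  simp [stoppedTime, h]

lemma stoppedTime_succ_of_not_occursAt {k : ℕ} (h : ¬ OccursAt u ξ (stoppedTime u ξ k)) :
    stoppedTime u ξ (k + 1) = k + 1 := by
  simp [stoppedTime, h]

lemma stoppedTime_le (u : List (Fin r)) (ξ : ℕ → Fin r) (k : ℕ) : stoppedTime u ξ k ≤ k := by
  induction k with
  | zero => rfl
  | succ k ih =>
    by_cases h : OccursAt u ξ (stoppedTime u ξ k)
    · rw [stoppedTime_succ_of_occursAt h]; omega
    · rw [stoppedTime_succ_of_not_occursAt h]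

lemma stoppedTime_mono (u : List (Fin r)) (ξ : ℕ → Fin r) : Monotone (stoppedTime u ξ) :=
  monotone_nat_of_le_succ fun k => by
    by_cases h : OccursAt u ξ (stoppedTime u ξ k)
    · rw [stoppedTime_succ_of_occursAt h]
    · rw [stoppedTime_succ_of_not_occursAt h]; exact (stoppedTime_le u ξ k).trans k.le_succ

lemma stoppedTime_eq_self_or_occursAt (k : ℕ) :
    stoppedTime u ξ k = k ∨ OccursAt u ξ (stoppedTime u ξ k) := by
  cases k with
  | zero => exact .inl rfl
  | succ k =>
    by_cases h : OccursAt u ξ (stoppedTime u ξ k)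
    · rw [stoppedTime_succ_of_occursAt h]; exact .inr h
    · exact .inl (stoppedTime_succ_of_not_occursAt h)

lemma stoppedTime_eq_self {k : ℕ} (h : ∀ j < k, ¬ OccursAt u ξ j) : stoppedTime u ξ k = k := by
  induction k with
  | zero => rfl
  | succ k ih =>
    have ih := ih fun j hj => h j (by omega)
    exact stoppedTime_succ_of_not_occursAt (by rw [ih]; exact h k (by omega))

lemma stoppedTime_of_first_occursAt {t k : ℕ} (ht : OccursAt u ξ t)
    (hfirst : ∀ j < t, ¬ OccursAt u ξ j) (hk : t ≤ k) : stoppedTime u ξ k = t := by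
  obtain ⟨n, rfl⟩ := Nat.exists_eq_add_of_le hk
  have hst : stoppedTime u ξ t = t := stoppedTime_eq_self hfirst
  induction n with
  | zero => exact hst
  | succ n ih =>
    rw [← add_assoc, stoppedTime_succ_of_occursAt (by rwa [ih (by omega)]), ih le_self_add]

lemma waitTime_eq_iSup_stoppedTime (u : List (Fin r)) (ξ : ℕ → Fin r) :
    waitTime u ξ = ⨆ k, (stoppedTime u ξ k : ℝ≥0∞) := by
  classical
  rw [waitTime_eq_sInf]
  by_cases h : ∃ k, OccursAt u ξ k
  · have hfirst : ∀ j < Nat.find h, ¬ OccursAt u ξ j := fun j => Nat.find_min h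
    have hst : ∀ k, stoppedTime u ξ k ≤ Nat.find h := fun k => by
      rcases le_total k (Nat.find h) with hk | hk
      · exact (stoppedTime_le u ξ k).trans hk
      · exact (stoppedTime_of_first_occursAt (Nat.find_spec h) hfirst hk).le
    apply le_antisymm
    · refine sInf_le_of_le ⟨_, Nat.find_spec h, rfl⟩ (le_iSup_of_le (Nat.find h) ?_)
      rw [stoppedTime_of_first_occursAt (Nat.find_spec h) hfirst le_rfl]
    · refine iSup_le fun k => le_sInf ?_
      rintro _ ⟨j, hj, rfl⟩
      exact Nat.cast_le.2 ((hst k).trans (Nat.find_min' h hj))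
  · push Not at h
    have : {k | OccursAt u ξ k} = ∅ := Set.eq_empty_of_forall_notMem h
    simp only [this, Set.image_empty, sInf_empty, stoppedTime_eq_self fun j _ => h j]
    exact ENNReal.iSup_natCast.symm

lemma stoppedTime_congr {ξ' : ℕ → Fin r} {k : ℕ} (h : ∀ n < k, ξ n = ξ' n) :
    stoppedTime u ξ k = stoppedTime u ξ' k := by
  induction k with
  | zero => rfl
  | succ k ih =>
    have e := ih fun n hn => h n (by omega)
    have hocc : OccursAt u ξ (stoppedTime u ξ' k) ↔ OccursAt u ξ' (stoppedTime u ξ' k) :=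
      occursAt_congr fun n hn => h n (by have := stoppedTime_le u ξ' k; omega)
    by_cases hc : OccursAt u ξ' (stoppedTime u ξ' k)
    · rw [stoppedTime_succ_of_occursAt (by rwa [e, hocc]), stoppedTime_succ_of_occursAt hc, e]
    · rw [stoppedTime_succ_of_not_occursAt (by rwa [e, hocc]), stoppedTime_succ_of_not_occursAt hc]

end StoppedTime

section Measure

def IsIidSequence (μ : Measure (ℕ → Fin r)) (p : Fin r → ℝ≥0∞) : Prop :=
  ∀ (m : ℕ) (f : ℕ → Fin r), μ {ξ | ∀ i < m, ξ i = f i} = ∏ i ∈ Finset.range m, p (f i)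

def firstLetters (m : ℕ) (ξ : ℕ → Fin r) : Fin m → Fin r := fun i => ξ i

lemma measurable_firstLetters (m : ℕ) : Measurable (firstLetters (r := r) m) :=
  measurable_pi_lambda _ fun i => measurable_pi_apply i.1

variable [NeZero r]

def extendByZero {m : ℕ} (g : Fin m → Fin r) : ℕ → Fin r :=
  fun n => if h : n < m then g ⟨n, h⟩ else 0

lemma eq_comp_firstLetters_of_dependsOn {β : Type*} {F : (ℕ → Fin r) → β} {m : ℕ}
    (hF : DependsOn F (Set.Iio m)) :
    F = (F ∘ extendByZero) ∘ firstLetters m :=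
  funext fun ξ => hF fun n hn => by simp [extendByZero, firstLetters, Set.mem_Iio.1 hn]

lemma measurable_of_dependsOn {β : Type*} [MeasurableSpace β] {F : (ℕ → Fin r) → β} {m : ℕ}
    (hF : DependsOn F (Set.Iio m)) : Measurable F := by
  rw [eq_comp_firstLetters_of_dependsOn hF]
  exact (measurable_of_countable _).comp (measurable_firstLetters m)

variable {μ : Measure (ℕ → Fin r)}

lemma lintegral_eq_sum_of_dependsOn
    (hiid : IsIidSequence μ p) {m : ℕ} {F : (ℕ → Fin r) → ℝ≥0∞} (hF : DependsOn F (Set.Iio m)) :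
    ∫⁻ ξ, F ξ ∂μ = ∑ g : Fin m → Fin r, (∏ i, p (g i)) * F (extendByZero g) := by
  calc ∫⁻ ξ, F ξ ∂μ = ∫⁻ ξ, (F ∘ extendByZero) (firstLetters m ξ) ∂μ :=
        lintegral_congr fun ξ => congrFun (eq_comp_firstLetters_of_dependsOn hF) ξ
    _ = ∫⁻ g, F (extendByZero g) ∂μ.map (firstLetters m) :=
        (lintegral_map (measurable_of_countable _) (measurable_firstLetters m)).symm
    _ = _ := lintegral_fintype _
  refine Finset.sum_congr rfl fun g _ => ?_
  have hcyl : firstLetters m ⁻¹' {g} =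
      {ξ | ∀ i < m, ξ i = extendByZero g i} := by
    ext ξ
    simp only [Set.mem_preimage, Set.mem_singleton_iff, funext_iff, Set.mem_ofPred_eq,
      firstLetters]
    exact ⟨fun h i hi => by simp [extendByZero, hi, ← h],
      fun h i => by simp [h i i.2, extendByZero]⟩
  rw [Measure.map_apply (measurable_firstLetters m) (measurableSet_singleton g), hcyl, hiid,
    ← Fin.prod_univ_eq_prod_range, mul_comm]
  simp [extendByZero]

lemma lintegral_eq_lintegral_sum_update
    (hiid : IsIidSequence μ p) {k : ℕ} {F : (ℕ → Fin r) → ℝ≥0∞}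
    (hF : DependsOn F (Set.Iio (k + 1))) :
    ∫⁻ ξ, F ξ ∂μ = ∫⁻ ξ, ∑ y, p y * F (Function.update ξ k y) ∂μ := by
  have hG : DependsOn (fun ξ => ∑ y, p y * F (Function.update ξ k y)) (Set.Iio k) :=
    fun ξ ξ' h => Finset.sum_congr rfl fun y _ => by
      refine congrArg _ (hF fun n hn => ?_)
      rcases eq_or_ne n k with rfl | hnk
      · simp
      · simp [Function.update_of_ne hnk, h n (by simp at hn ⊢; omega)]
  rw [lintegral_eq_sum_of_dependsOn hiid hF, lintegral_eq_sum_of_dependsOn hiid hG,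
    ← (Fin.snocEquiv fun _ => Fin r).sum_comp, Fintype.sum_prod_type_right]
  refine Finset.sum_congr rfl fun g _ => ?_
  rw [Finset.mul_sum]
  refine Finset.sum_congr rfl fun y _ => ?_
  have hext : extendByZero ((Fin.snocEquiv fun _ => Fin r) (y, g)) =
      Function.update (extendByZero g) k y := by
    funext n
    rcases lt_trichotomy n k with hn | rfl | hn
    · simp only [extendByZero, Function.update_of_ne hn.ne, dif_pos hn,
        dif_pos (Nat.lt_succ_of_lt hn), Fin.snocEquiv_apply]
      exact Fin.snoc_castSucc (α := fun _ => Fin r) y g ⟨n, hn⟩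
    · simp only [extendByZero, dif_pos n.lt_succ_self, Function.update_self, Fin.snocEquiv_apply]
      exact Fin.snoc_last (α := fun _ => Fin r) y g
    · simp [extendByZero, Function.update_of_ne hn.ne', hn.not_gt, not_le.2 hn]
  simp only [hext, Fin.snocEquiv_apply, Fin.prod_univ_castSucc, Fin.snoc_castSucc, Fin.snoc_last]
  ring

end Measure

open Filter Topology

variable {u : List (Fin r)}

lemma dependsOn_stoppedTime (u : List (Fin r)) (k : ℕ) :
    DependsOn (fun ξ => (stoppedTime u ξ k : ℝ≥0∞)) (Set.Iio k) :=
  fun ξ ξ' h => by dsimp only; rw [stoppedTime_congr h]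

lemma dependsOn_capital_stoppedTime (p : Fin r → ℝ≥0∞) (u : List (Fin r)) (k : ℕ) :
    DependsOn (fun ξ => capital p u ξ (stoppedTime u ξ k)) (Set.Iio k) :=
  fun ξ ξ' h => by
    dsimp only
    rw [stoppedTime_congr h,
      capital_congr fun n hn => h n (lt_of_lt_of_le hn (stoppedTime_le u ξ' k))]

lemma sum_mul_capital_stoppedTime_update (hp1 : ∑ y, p y = 1) (hp0 : ∀ y, p y ≠ 0)
    (ξ : ℕ → Fin r) (k : ℕ) :
    ∑ y, p y * capital p u (Function.update ξ k y) (stoppedTime u (Function.update ξ k y) (k + 1))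
        + stoppedTime u ξ k =
      capital p u ξ (stoppedTime u ξ k) + stoppedTime u ξ (k + 1) := by
  have hagree : ∀ y, ∀ n < k, Function.update ξ k y n = ξ n :=
    fun y n hn => Function.update_of_ne hn.ne _ _
  have hst : ∀ y, stoppedTime u (Function.update ξ k y) k = stoppedTime u ξ k :=
    fun y => stoppedTime_congr (hagree y)
  have hocc : ∀ y, OccursAt u (Function.update ξ k y) (stoppedTime u ξ k) ↔
      OccursAt u ξ (stoppedTime u ξ k) :=
    fun y => occursAt_congr fun n hn => hagree y n (lt_of_lt_of_le hn (stoppedTime_le u ξ k))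
  by_cases h : OccursAt u ξ (stoppedTime u ξ k)
  · have hcap : ∀ y, capital p u (Function.update ξ k y)
        (stoppedTime u (Function.update ξ k y) (k + 1)) = capital p u ξ (stoppedTime u ξ k) :=
      fun y => by
        rw [stoppedTime_succ_of_occursAt (by rw [hst]; exact (hocc y).2 h), hst,
          capital_congr fun n hn => hagree y n (lt_of_lt_of_le hn (stoppedTime_le u ξ k))]
    rw [stoppedTime_succ_of_occursAt h]
    simp only [hcap, ← Finset.sum_mul, hp1, one_mul]
  · have hk : stoppedTime u ξ k = k := (stoppedTime_eq_self_or_occursAt k).resolve_right h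
    have hst' : ∀ y, stoppedTime u (Function.update ξ k y) (k + 1) = k + 1 := fun y =>
      stoppedTime_succ_of_not_occursAt (by rw [hst]; exact fun h' => h ((hocc y).1 h'))
    rw [hk] at h
    rw [stoppedTime_succ_of_not_occursAt (by rwa [hk]), hk]
    simp only [hst']
    rw [sum_mul_capital_update hp0 (ne_top_of_sum_eq_one hp1) h]
    push_cast
    ring

lemma exists_occursAt_of_waitTime_ne_top {ξ : ℕ → Fin r} (h : waitTime u ξ ≠ ⊤) :
    ∃ k, OccursAt u ξ k := by
  simpa [waitTime_eq_sInf] using h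

variable [NeZero r] {μ : Measure (ℕ → Fin r)}

lemma measurable_waitTime (u : List (Fin r)) : Measurable (waitTime u) := by
  simp only [funext (waitTime_eq_iSup_stoppedTime u)]
  exact .iSup fun k => measurable_of_dependsOn (dependsOn_stoppedTime u k)

lemma Ew_eq_iSup_lintegral_stoppedTime (u : List (Fin r)) :
    Ew μ u = ⨆ k, ∫⁻ ξ, (stoppedTime u ξ k : ℝ≥0∞) ∂μ := by
  simp only [Ew, waitTime_eq_iSup_stoppedTime]
  exact lintegral_iSup (fun k => measurable_of_dependsOn (dependsOn_stoppedTime u k))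
    fun k k' h ξ => Nat.cast_le.2 (stoppedTime_mono u ξ h)

variable [IsProbabilityMeasure μ]

lemma lintegral_capital_stoppedTime (hiid : IsIidSequence μ p) (hp1 : ∑ y, p y = 1)
    (hp0 : ∀ y, p y ≠ 0) (k : ℕ) :
    ∫⁻ ξ, capital p u ξ (stoppedTime u ξ k) ∂μ = ∫⁻ ξ, (stoppedTime u ξ k : ℝ≥0∞) ∂μ := by
  induction k with
  | zero => simp [stoppedTime, capital]
  | succ k ih =>
    have hfin : ∫⁻ ξ, (stoppedTime u ξ k : ℝ≥0∞) ∂μ ≠ ⊤ :=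
      ne_top_of_le_ne_top (by simp : ∫⁻ _, (k : ℝ≥0∞) ∂μ ≠ ⊤)
        (lintegral_mono fun ξ => Nat.cast_le.2 (stoppedTime_le u ξ k))
    have key : ∫⁻ ξ, capital p u ξ (stoppedTime u ξ (k + 1)) ∂μ
          + ∫⁻ ξ, (stoppedTime u ξ k : ℝ≥0∞) ∂μ =
        ∫⁻ ξ, capital p u ξ (stoppedTime u ξ k) ∂μ
          + ∫⁻ ξ, (stoppedTime u ξ (k + 1) : ℝ≥0∞) ∂μ := by
      rw [lintegral_eq_lintegral_sum_update hiid (dependsOn_capital_stoppedTime p u (k + 1)),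
        ← lintegral_add_right _ (measurable_of_dependsOn (dependsOn_stoppedTime u k)),
        ← lintegral_add_right _ (measurable_of_dependsOn (dependsOn_stoppedTime u (k + 1)))]
      exact lintegral_congr (sum_mul_capital_stoppedTime_update hp1 hp0 · k)
    rw [ih] at key
    exact (ENNReal.add_left_inj hfin).1 (key.trans (add_comm _ _))

lemma tendsto_lintegral_capital_stoppedTime (hp0 : ∀ y, p y ≠ 0) (hfin : Ew μ u ≠ ⊤) :
    Tendsto (fun k => ∫⁻ ξ, capital p u ξ (stoppedTime u ξ k) ∂μ) atTop (𝓝 (conway p u)) := by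
  classical
  have hlim : ∀ᵐ ξ ∂μ, Tendsto (fun k => capital p u ξ (stoppedTime u ξ k)) atTop
      (𝓝 (conway p u)) := by
    filter_upwards [ae_lt_top (measurable_waitTime u) hfin] with ξ hξ
    have h := exists_occursAt_of_waitTime_ne_top hξ.ne
    refine tendsto_atTop_of_eventually_const (i₀ := Nat.find h) fun k hk => ?_
    rw [stoppedTime_of_first_occursAt (Nat.find_spec h) (fun j => Nat.find_min h) hk,
      capital_of_occursAt (Nat.find_spec h)]
  simpa using tendsto_lintegral_of_dominated_convergence _
    (fun k => measurable_of_dependsOn (dependsOn_capital_stoppedTime p u k))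
    (fun k => ae_of_all _ (capital_le p u · _))
    (by simpa using sum_inv_pword_take_ne_top hp0 u) hlim

theorem Ew_eq_conway (hiid : IsIidSequence μ p) (hp1 : ∑ y, p y = 1) (hp0 : ∀ y, p y ≠ 0)
    (u : List (Fin r)) : Ew μ u = conway p u := by
  have hmart := lintegral_capital_stoppedTime (u := u) hiid hp1 hp0
  have hE := Ew_eq_iSup_lintegral_stoppedTime (μ := μ) u
  have hfin : Ew μ u ≠ ⊤ := by
    refine hE ▸ ne_top_of_le_ne_top (sum_inv_pword_take_ne_top hp0 u) (iSup_le fun k => ?_)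
    rw [← hmart]
    exact (lintegral_mono (capital_le p u · _)).trans (by simp)
  refine tendsto_nhds_unique (hE ▸ tendsto_atTop_iSup fun k k' h =>
    lintegral_mono fun ξ => Nat.cast_le.2 (stoppedTime_mono u ξ h)) ?_
  simpa only [hmart] using tendsto_lintegral_capital_stoppedTime hp0 hfin

end WaitingTime

open WaitingTime

theorem statement_6_general {r : ℕ} (p : Fin r → ℝ≥0∞)
    (hp1 : ∑ x, p x = 1) (hpos : ∀ x, 0 < p x)
    (μ : Measure (ℕ → Fin r)) [IsProbabilityMeasure μ]
    (hiid : ∀ (m : ℕ) (f : ℕ → Fin r),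
      μ {ξ | ∀ i < m, ξ i = f i} = ∏ i ∈ Finset.range m, p (f i))
    (w : List (Fin r)) (wHat : Fin r → List (Fin r))
    (hwHat : ∀ y, IsLongestBifix (wHat y) (w.dropLast ++ [y])) (x : Fin r) :
    p x * Ew μ (w.dropLast ++ [x]) =
      Ew μ w.dropLast + 1 -
        ∑ y ∈ Finset.univ.filter (fun y => y ≠ x), p y * Ew μ (wHat y) := by
  have : NeZero r := ⟨by rintro rfl; simp at hp1⟩
  have hp0 : ∀ y, p y ≠ 0 := fun y => (hpos y).ne'
  have hptop : ∀ y, p y ≠ ⊤ := ne_top_of_sum_eq_one hp1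
  simp only [Ew_eq_conway hiid hp1 hp0]
  set v := w.dropLast
  set S := ∑ y ∈ Finset.univ.filter (fun y => y ≠ x), p y * conway p (wHat y) with hS_def
  have hS : S ≠ ⊤ :=
    ENNReal.sum_ne_top.2 fun y _ => ENNReal.mul_ne_top (hptop y) (conway_ne_top hp0 _)
  have hsplit : ∑ y, p y * conway p (wHat y) = p x * conway p (wHat x) + S := by
    rw [hS_def, Finset.filter_ne' Finset.univ x]
    exact (Finset.add_sum_erase _ _ (Finset.mem_univ x)).symm
  suffices conway p v + 1 = S + p x * conway p (v ++ [x]) by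
    rw [this, ENNReal.add_sub_cancel_left hS]
  calc conway p v + 1 = ∑ j ∈ Finset.range (v.length + 1), payoff p v (v.rtake j) := by
        rw [sum_range_succ_payoff_rtake, add_comm]
    _ = ∑ y, p y * conway p (wHat y) + (pword p v)⁻¹ := by
        rw [Finset.sum_range_succ, sum_mul_conway_longestBifix hp0 hptop hwHat, rtake_length_self,
          payoff_self]
    _ = S + p x * conway p (v ++ [x]) := by
        rw [hsplit, conway_eq_inv_pword_add_conway (hwHat x), mul_add,
          mul_inv_pword_concat v (hp0 x) (hptop x)]
        ring

theorem statement_6 {r : ℕ} (hr : 2 ≤ r) (p : Fin r → ℝ≥0∞)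
    (hp1 : ∑ x, p x = 1) (hpos : ∀ x, 0 < p x)
    (μ : Measure (ℕ → Fin r)) [IsProbabilityMeasure μ]
    (hiid : ∀ (m : ℕ) (f : ℕ → Fin r),
      μ {ξ | ∀ i < m, ξ i = f i} = ∏ i ∈ Finset.range m, p (f i))
    (w : List (Fin r)) (hw : w ≠ []) (wHat : Fin r → List (Fin r))
    (hwHat : ∀ y, IsLongestBifix (wHat y) (w.dropLast ++ [y])) (x : Fin r) :
    p x * Ew μ (w.dropLast ++ [x]) =
      Ew μ w.dropLast + 1 -
        ∑ y ∈ Finset.univ.filter (fun y => y ≠ x), p y * Ew μ (wHat y) :=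
  statement_6_general p hp1 hpos μ hiid w wHat hwHat x
end

section
/- Let w be a finite word of length n ≥ 2. For y ∈ X let n_y be the length of the longest bifix of w[1,n−1]y, and suppose x maximizes n_y over y ∈ X. Then w[1, n_x−1] is the longest bifix of w[1, n−1]. -/
open MeasureTheory ENNReal

/-
Write `w' = w[1, n-1]`. A bifix `v` of `w'` extends by the letter `w'[|v|]` to a bifix of
`w' ++ [w'[|v|]]`, and dropping the last letter of a nonempty bifix of `w' ++ [y]` gives a bifix
of `w'`. Since `w'` has the empty bifix, `n_x ≥ 1`; so the longest bifix of `w' ++ [x]` minus its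
last letter is a bifix of `w'` of length `n_x - 1`, while every bifix `v` of `w'` satisfies
`|v| + 1 ≤ n_y ≤ n_x` for `y = w'[|v|]`.
-/

namespace IsBifix

variable {r : ℕ}

theorem nil {w : List (Fin r)} (hw : w ≠ []) : IsBifix [] w :=
  ⟨hw.symm, List.nil_prefix, List.nil_suffix⟩

theorem length_lt {v w : List (Fin r)} (h : IsBifix v w) : v.length < w.length :=
  lt_of_le_of_ne h.2.1.length_le fun hlen => h.1 (h.2.1.eq_of_length hlen)

theorem append_getElem {v w : List (Fin r)} (h : IsBifix v w) :
    IsBifix (v ++ [w[v.length]'h.length_lt]) (w ++ [w[v.length]'h.length_lt]) := by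
  have hk := h.length_lt
  obtain ⟨-, hpre, t, ht⟩ := h
  refine ⟨fun heq => hk.ne (congrArg List.length (List.append_cancel_right heq)), ?_,
    ⟨t, by rw [← List.append_assoc, ht]⟩⟩
  calc v ++ [w[v.length]] = w.take v.length ++ [w[v.length]] :=
        congrArg (· ++ [w[v.length]]) (List.prefix_iff_eq_take.mp hpre)
    _ = w.take (v.length + 1) := (List.take_succ_eq_append_getElem hk).symm
    _ <+: w ++ [w[v.length]] := (List.take_prefix _ _).trans (List.prefix_append _ _)

theorem dropLast_of_append_singleton {v w : List (Fin r)} {y : Fin r}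
    (h : IsBifix v (w ++ [y])) (hv : v ≠ []) : IsBifix v.dropLast w := by
  have hlen := h.length_lt
  obtain ⟨hne, hpre, hsuf⟩ := h
  have hpre' : v <+: w := (List.prefix_concat_iff.mp hpre).resolve_left hne
  obtain ⟨t, rfl, ht⟩ := (List.suffix_concat_iff.mp hsuf).resolve_left hv
  rw [List.dropLast_concat]
  refine ⟨?_, (List.prefix_append _ _).trans hpre', ht⟩
  rintro rfl
  simp at hlen

end IsBifix

theorem statement_8_general {r : ℕ}
    (w : List (Fin r)) (hw : 2 ≤ w.length) (wHat : Fin r → List (Fin r))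
    (hwHat : ∀ y, IsLongestBifix (wHat y) (w.dropLast ++ [y])) (x : Fin r)
    (hx : ∀ y, (wHat y).length ≤ (wHat x).length) :
    IsLongestBifix (w.take ((wHat x).length - 1)) w.dropLast := by
  have extend_le : ∀ v, IsBifix v w.dropLast → v.length + 1 ≤ (wHat x).length := fun v hv => by
    simpa using ((hwHat _).2 _ hv.append_getElem).trans (hx _)
  have hnil : IsBifix [] w.dropLast := IsBifix.nil (List.ne_nil_of_length_pos (by rw [List.length_dropLast]; omega))
  have hne : wHat x ≠ [] := List.ne_nil_of_length_pos (extend_le [] hnil)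
  have hu := (hwHat x).1.dropLast_of_append_singleton hne
  have htake : w.take ((wHat x).length - 1) = (wHat x).dropLast := by
    rw [List.prefix_iff_eq_take.mp hu.2.1, List.length_dropLast, List.dropLast_eq_take,
      List.take_take, min_eq_left (by simpa using hu.length_lt.le)]
  rw [htake]
  refine ⟨hu, fun v hv => ?_⟩
  simpa using Nat.le_sub_one_of_lt (extend_le v hv)

theorem statement_8 {r : ℕ} (hr : 2 ≤ r)
    (w : List (Fin r)) (hw : 2 ≤ w.length) (wHat : Fin r → List (Fin r))
    (hwHat : ∀ y, IsLongestBifix (wHat y) (w.dropLast ++ [y])) (x : Fin r)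
    (hx : ∀ y, (wHat y).length ≤ (wHat x).length) :
    IsLongestBifix (w.take ((wHat x).length - 1)) w.dropLast :=
  statement_8_general w hw wHat hwHat x hx
end

section
/- (Solov'ev–Nielsen–Blom formula) Let w be a finite word of length at least 1 over X and let ŵ be the longest bifix of w. Then the expected waiting time until w first occurs in an i.i.d. random sequence satisfies E(w) = E(ŵ) + p(w)^{-1}, where p(w) = ∏_{i=1}^{|w|} p(w(i)). -/
open MeasureTheory ENNReal

namespace SNB
open List

variable {α : Type*}

lemma take_prefix_take {j k : ℕ} (h : j ≤ k) (v : List α) : v.take j <+: v.take k := by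
  rw [prefix_take_iff]
  exact ⟨take_prefix _ _, le_trans (by simp [length_take]) h⟩

lemma infix_iff_exists_take {w v : List α} :
    w <:+: v ↔ ∃ k, k ≤ v.length ∧ w <:+ v.take k := by
  constructor
  · rintro ⟨s, t, rfl⟩
    refine ⟨s.length + w.length, by simp [List.length_append], ?_⟩
    have h : (s ++ w ++ t).take (s.length + w.length) = s ++ w := by
      have := take_left' (l₁ := s ++ w) (l₂ := t) (i := s.length + w.length)
        (by simp [List.length_append])
      rwa [List.append_assoc] at this ⊢
    rw [h]
    exact suffix_append s w
  · rintro ⟨k, hk, hsuf⟩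
    exact hsuf.isInfix.trans (take_prefix k v).isInfix

lemma infix_take_of_suffix_take {u v : List α} {j k : ℕ} (h : u <:+ v.take j) (hjk : j ≤ k) :
    u <:+: v.take k :=
  h.isInfix.trans (take_prefix_take hjk v).isInfix

lemma infix_dropLast_of_suffix_take {u v : List α} {j : ℕ} (h : u <:+ v.take j)
    (hj : j < v.length) : u <:+: v.dropLast := by
  rw [dropLast_eq_take]
  exact infix_take_of_suffix_take h (by omega)

lemma infix_dropLast_or {w v : List α} : w <:+: v ↔ w <:+: v.dropLast ∨ w <:+ v := by
  constructor
  · intro h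
    obtain ⟨k, hk, hs⟩ := infix_iff_exists_take.mp h
    rcases eq_or_lt_of_le hk with rfl | hlt
    · right; rwa [take_length] at hs
    · left; exact infix_dropLast_of_suffix_take hs hlt
  · rintro (h | h)
    · exact h.trans (dropLast_prefix v).isInfix
    · exact h.isInfix

/-- The overlap/border lemma: if `w` is a suffix of `x ++ w.take ℓ` (long enough), then
`w.take ℓ` is also a suffix of `w`. -/
lemma take_suffix_of_suffix_append {w x : List α} {ℓ : ℕ} (hl : ℓ ≤ w.length)
    (hx : w.length ≤ x.length + ℓ) (h : w <:+ x ++ w.take ℓ) : w.take ℓ <:+ w := by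
  obtain ⟨s, hs⟩ := h
  have hlen : s.length + w.length = x.length + ℓ := by
    have := congrArg List.length hs
    simpa [List.length_append, length_take, Nat.min_eq_left hl] using this
  have hdrop := congrArg (List.drop x.length) hs
  rw [List.drop_left] at hdrop
  have hxs : s.length ≤ x.length := by omega
  have hxeq : x.length = s.length + (x.length - s.length) := by omega
  rw [hxeq, List.drop_length_add_append] at hdrop
  have h2 : x.length - s.length = w.length - ℓ := by omega
  rw [h2] at hdrop
  rw [suffix_iff_eq_drop, length_take, Nat.min_eq_left hl]
  exact hdrop.symm

/-- `z` ends with `u` and contains no other occurrence of `u`. -/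
def FirstOcc (u z : List α) : Prop := u <:+ z ∧ ¬ u <:+: z.dropLast

lemma firstOcc_append {w wh x : List α} (hpre : wh <+: w) (hlen : wh.length < w.length)
    (hmax : ∀ v, v ≠ w → v <+: w → v <:+ w → v.length ≤ wh.length)
    (hfree : ¬ w <:+: x ++ wh) : FirstOcc w (x ++ w) := by
  refine ⟨suffix_append x w, fun hcon => ?_⟩
  obtain ⟨k, hk, hs⟩ := infix_iff_exists_take.mp hcon
  have hLd : (x ++ w).dropLast.length = x.length + w.length - 1 := by
    simp [length_dropLast, List.length_append]
  rw [hLd] at hk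
  have hwpos : 0 < w.length := by omega
  have hs' : w <:+ (x ++ w).take k := by
    rw [dropLast_eq_take, take_take] at hs
    have hmin : k ⊓ ((x ++ w).length - 1) = k := by
      simp [List.length_append]; omega
    rwa [hmin] at hs
  have hwk : w.length ≤ k := by
    have := hs'.length_le
    simp only [length_take, List.length_append] at this
    omega
  by_cases hcase : k ≤ x.length + wh.length
  · have h1 : x ++ wh <+: x ++ w := (prefix_append_right_inj x).mpr hpre
    have h2 : (x ++ w).take k <+: x ++ wh := by
      refine prefix_of_prefix_length_le (take_prefix _ _) h1 ?_
      simp [length_take, List.length_append]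
      omega
    exact hfree (hs'.isInfix.trans h2.isInfix)
  · push_neg at hcase
    set ℓ := k - x.length with hℓ
    have hℓw : ℓ ≤ w.length := by omega
    have hkeq : k = x.length + ℓ := by omega
    have htk : (x ++ w).take k = x ++ w.take ℓ := by
      rw [hkeq, List.take_length_add_append]
    rw [htk] at hs'
    have hbord : w.take ℓ <:+ w :=
      take_suffix_of_suffix_append hℓw (by omega) hs'
    have hne : w.take ℓ ≠ w := by
      intro h
      have := congrArg List.length h
      simp [length_take, Nat.min_eq_left hℓw] at this
      omega
    have := hmax (w.take ℓ) hne (take_prefix _ _) hbord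
    rw [length_take, Nat.min_eq_left hℓw] at this
    omega

lemma exists_of_firstOcc {w wh z : List α} (hpre : wh <+: w) (hlen : wh.length < w.length)
    (hz : FirstOcc w z) : ∃ x, z = x ++ w ∧ ¬ w <:+: x ++ wh := by
  obtain ⟨x, hx⟩ := hz.1
  refine ⟨x, hx.symm, fun hcon => hz.2 ?_⟩
  subst hx
  have h1 : x ++ wh <+: x ++ w := (prefix_append_right_inj x).mpr hpre
  have h2 : x ++ wh <+: (x ++ w).dropLast := by
    refine prefix_of_prefix_length_le h1 (dropLast_prefix _) ?_
    simp [length_dropLast, List.length_append]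
    omega
  exact hcon.trans h2.isInfix

lemma firstOcc_ne_nil {u z : List α} (hu : u ≠ []) (hz : FirstOcc u z) : z ≠ [] := by
  rintro rfl
  exact hu (suffix_nil.mp hz.1)

/-- splitting at the first occurrence of `wh`. -/
lemma split_exists {wh v : List α} (hne : wh ≠ []) (hocc : wh <:+: v) :
    ∃ z v', v = z ++ v' ∧ FirstOcc wh z := by
  classical
  have hexP : ∃ k, k ≤ v.length ∧ wh <:+ v.take k := infix_iff_exists_take.mp hocc
  set k := Nat.find hexP with hkdef
  obtain ⟨hkle, hPk⟩ := Nat.find_spec hexP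
  rw [← hkdef] at hkle hPk
  have hkpos : 0 < k := by
    rcases Nat.eq_zero_or_pos k with h0 | h
    · exfalso; rw [h0] at hPk; simp at hPk; exact hne hPk
    · exact h
  refine ⟨v.take k, v.drop k, (take_append_drop k v).symm, hPk, fun hcon => ?_⟩
  obtain ⟨j, hj, hsj⟩ := infix_iff_exists_take.mp hcon
  have hlz : (v.take k).length = k := by simp [length_take]; omega
  have hjk : j ≤ k - 1 := by
    rw [length_dropLast, hlz] at hj; omega
  have heq : (v.take k).dropLast.take j = v.take j := by
    rw [dropLast_eq_take, hlz, take_take, take_take]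
    congr 1
    omega
  rw [heq] at hsj
  exact Nat.find_min hexP (m := j) (by omega) ⟨by omega, hsj⟩

lemma suffix_drop_of_suffix {u t : List α} {m : ℕ} (h : u <:+ t) (hm : m + u.length ≤ t.length) :
    u <:+ t.drop m := by
  obtain ⟨s, rfl⟩ := h
  have hms : m ≤ s.length := by
    simp [List.length_append] at hm; omega
  rw [List.drop_append_of_le_length hms]
  exact suffix_append _ _

/-- (K2) injectivity of the first-occurrence splitting. -/
lemma firstOcc_inj {wh z₁ z₂ v₁ v₂ : List α} (h1 : FirstOcc wh z₁) (h2 : FirstOcc wh z₂)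
    (heq : z₁ ++ v₁ = z₂ ++ v₂) : z₁ = z₂ ∧ v₁ = v₂ := by
  have key : ∀ {a₁ a₂ b₁ b₂ : List α}, FirstOcc wh a₁ → FirstOcc wh a₂ →
      a₁ ++ b₁ = a₂ ++ b₂ → a₁.length ≤ a₂.length → a₁.length = a₂.length := by
    intro a₁ a₂ b₁ b₂ g1 g2 geq glen
    rcases eq_or_lt_of_le glen with h | h
    · exact h
    · exfalso
      have htk : (a₂ ++ b₂).take a₁.length = a₂.take a₁.length :=
        take_append_of_le_length (le_of_lt h)
      have htk1 : (a₁ ++ b₁).take a₁.length = a₁ := take_left' rfl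
      have hsuf : wh <:+ a₂.take a₁.length := by
        rw [← htk, ← geq, htk1]; exact g1.1
      exact g2.2 (infix_dropLast_of_suffix_take hsuf h)
  have hlen : z₁.length = z₂.length := by
    rcases le_total z₁.length z₂.length with h | h
    · exact key h1 h2 heq h
    · exact (key h2 h1 heq.symm h).symm
  exact append_inj heq hlen

/-- (K1) composing. -/
lemma firstOcc_comp {w wh z v' : List α} (hpre : wh <+: w)
    (hz : FirstOcc wh z) (hv' : ¬ w <:+: wh ++ v') :
    ¬ w <:+: z ++ v' ∧ wh <:+: z ++ v' := by
  constructor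
  · intro hcon
    obtain ⟨j, hj, hsj⟩ := infix_iff_exists_take.mp hcon
    set v := z ++ v' with hv
    have hjw : w.length ≤ j := by
      have := hsj.length_le
      simp only [length_take] at this
      omega
    -- w = wh ++ u
    have hwhle : wh.length ≤ w.length := hpre.length_le
    obtain ⟨u, hu⟩ := hpre
    have hulen : u.length = w.length - wh.length := by
      have := congrArg List.length hu; simp [List.length_append] at this; omega
    -- wh is a suffix of v.take (j - u.length)
    have hsj' := hsj
    obtain ⟨s, hsx⟩ := hsj'
    have hslen : s.length = j - w.length := by
      have := congrArg List.length hsx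
      simp only [List.length_append, length_take] at this
      omega
    have hwh_tk : wh <:+ v.take (j - u.length) := by
      have e1 : v.take (j - u.length) = (v.take j).take (s.length + wh.length) := by
        rw [take_take]
        congr 1
        omega
      have e2 : (s ++ (wh ++ u)).take (s.length + wh.length) = s ++ wh := by
        rw [← List.append_assoc]
        exact take_left' (by simp [List.length_append])
      rw [e1, ← hsx, ← hu, e2]
      exact suffix_append _ _
    -- minimality: j - u.length ≥ z.length
    have hzle : z.length ≤ j - u.length := by
      by_contra hlt
      push_neg at hlt
      have htkz : v.take (j - u.length) = z.take (j - u.length) :=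
        take_append_of_le_length (le_of_lt hlt)
      rw [htkz] at hwh_tk
      exact hz.2 (infix_dropLast_of_suffix_take hwh_tk hlt)
    obtain ⟨y, hy⟩ := hz.1
    have hwhz : wh.length ≤ z.length := hz.1.length_le
    have hylen : y.length = z.length - wh.length := by
      have := congrArg List.length hy; simp [List.length_append] at this; omega
    have hvdec : v = y ++ (wh ++ v') := by rw [hv, ← hy, List.append_assoc]
    have hjv : (v.take j).length = j := by simp [length_take]; omega
    have hws : w <:+ (v.take j).drop y.length := by
      apply suffix_drop_of_suffix hsj
      rw [hjv]
      omega
    have e3 : (v.take j).drop y.length = (wh ++ v').take (j - y.length) := by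
      rw [List.drop_take, hvdec, List.drop_left]
    rw [e3] at hws
    exact hv' (hws.isInfix.trans (take_prefix _ _).isInfix)
  · exact hz.1.isInfix.trans (prefix_append z v').isInfix

/-- (K3) -/
lemma split_full {w wh v : List α} (hne : wh ≠ []) (hv : ¬ w <:+: v) (hocc : wh <:+: v) :
    ∃ z v', v = z ++ v' ∧ FirstOcc wh z ∧ ¬ w <:+: wh ++ v' := by
  obtain ⟨z, v', rfl, hfo⟩ := split_exists hne hocc
  refine ⟨z, v', rfl, hfo, fun hcon => hv ?_⟩
  obtain ⟨y, hy⟩ := hfo.1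
  have hzdec : z ++ v' = y ++ (wh ++ v') := by rw [← hy, List.append_assoc]
  rw [hzdec]
  exact hcon.trans (suffix_append y (wh ++ v')).isInfix

end SNB

namespace SNB
open List

variable {r : ℕ} (p : Fin r → ℝ≥0∞)

@[simp] lemma pword_nil : pword p ([] : List (Fin r)) = 1 := by simp [pword]

@[simp] lemma pword_cons (a : Fin r) (v : List (Fin r)) :
    pword p (a :: v) = p a * pword p v := by simp [pword]

@[simp] lemma pword_append (a b : List (Fin r)) :
    pword p (a ++ b) = pword p a * pword p b := by simp [pword]

lemma pword_reverse (v : List (Fin r)) : pword p v.reverse = pword p v := by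
  rw [pword, pword, List.map_reverse, List.prod_reverse]

variable {p}

lemma pword_ne_zero (h0 : ∀ x, p x ≠ 0) (v : List (Fin r)) : pword p v ≠ 0 := by
  induction v with
  | nil => simp
  | cons a t ih => simp [mul_ne_zero (h0 a) ih]

lemma pword_le_one (h1 : ∀ x, p x ≤ 1) (v : List (Fin r)) : pword p v ≤ 1 := by
  induction v with
  | nil => simp
  | cons a t ih => simpa using mul_le_one' (h1 a) ih

lemma pword_ne_top (h1 : ∀ x, p x ≤ 1) (v : List (Fin r)) : pword p v ≠ ⊤ :=
  fun h => by simpa [h] using pword_le_one h1 v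

variable (p)

/-- total weight of a set of words -/
noncomputable def WS (S : Set (List (Fin r))) : ℝ≥0∞ :=
  ∑' v : List (Fin r), S.indicator (pword p) v

lemma WS_congr {S T : Set (List (Fin r))} (h : ∀ v, v ∈ S ↔ v ∈ T) : WS p S = WS p T := by
  rw [WS, WS, Set.ext h]

lemma WS_mono {S T : Set (List (Fin r))} (h : S ⊆ T) : WS p S ≤ WS p T :=
  Summable.tsum_le_tsum (fun v => Set.indicator_le_indicator_of_subset h (fun _ => zero_le) v)
    ENNReal.summable ENNReal.summable

lemma WS_union {S T : Set (List (Fin r))} (h : Disjoint S T) :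
    WS p (S ∪ T) = WS p S + WS p T := by
  rw [WS, WS, WS, ← ENNReal.tsum_add]
  congr 1
  ext v
  rw [Set.indicator_union_of_disjoint h]

@[simp] lemma WS_empty : WS p (∅ : Set (List (Fin r))) = 0 := by simp [WS]

variable {p}

/-- the workhorse: transfer `WS` along a weight-preserving bijection. -/
lemma WS_eq_of_bij {β : Type*} (h0 : ∀ x, p x ≠ 0) (S : Set (List (Fin r))) (F : β → ℝ≥0∞)
    (g : β → List (Fin r)) (T : Set β)
    (hF0 : ∀ b, b ∉ T → F b = 0)
    (hinj : ∀ b₁ ∈ T, ∀ b₂ ∈ T, g b₁ = g b₂ → b₁ = b₂)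
    (hmem : ∀ b ∈ T, g b ∈ S)
    (hval : ∀ b ∈ T, pword p (g b) = F b)
    (hsurj : ∀ v ∈ S, ∃ b ∈ T, g b = v) :
    WS p S = ∑' b : β, F b := by
  have hTsupp : ∀ b : β, F b ≠ 0 → b ∈ T := fun b h => by
    by_contra hb; exact h (hF0 b hb)
  apply tsum_eq_tsum_of_ne_zero_bij (fun b => g b.val)
  · rintro ⟨b₁, hb₁⟩ ⟨b₂, hb₂⟩ h
    exact Subtype.ext (hinj b₁ (hTsupp b₁ hb₁) b₂ (hTsupp b₂ hb₂) h)
  · intro v hv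
    have hvS : v ∈ S := by
      by_contra hvS
      exact hv (by simp [Set.indicator_of_notMem hvS])
    obtain ⟨b, hbT, hbv⟩ := hsurj v hvS
    have hFb : F b ≠ 0 := by
      rw [← hval b hbT, hbv]
      exact pword_ne_zero h0 v
    exact ⟨⟨b, hFb⟩, hbv⟩
  · rintro ⟨b, hb⟩
    have hbT := hTsupp b hb
    rw [Set.indicator_of_mem (hmem b hbT)]
    exact hval b hbT

/-- product decomposition by concatenation. -/
lemma WS_eq_mul (h0 : ∀ x, p x ≠ 0) (S T₁ T₂ : Set (List (Fin r)))
    (hinj : ∀ a₁ ∈ T₁, ∀ a₂ ∈ T₁, ∀ b₁ ∈ T₂, ∀ b₂ ∈ T₂,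
      a₁ ++ b₁ = a₂ ++ b₂ → a₁ = a₂)
    (hmem : ∀ a ∈ T₁, ∀ b ∈ T₂, a ++ b ∈ S)
    (hsurj : ∀ v ∈ S, ∃ a ∈ T₁, ∃ b ∈ T₂, a ++ b = v) :
    WS p S = WS p T₁ * WS p T₂ := by
  rw [WS_eq_of_bij h0 S
      (fun b : List (Fin r) × List (Fin r) =>
        T₁.indicator (pword p) b.1 * T₂.indicator (pword p) b.2)
      (fun b => b.1 ++ b.2) {b | b.1 ∈ T₁ ∧ b.2 ∈ T₂} ?_ ?_ ?_ ?_ ?_]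
  · rw [ENNReal.tsum_prod']
    simp_rw [ENNReal.tsum_mul_left]
    rw [ENNReal.tsum_mul_right, WS, WS]
  · rintro ⟨a, b⟩ hab
    simp only [Set.mem_setOf_eq, not_and_or] at hab
    rcases hab with h | h <;> simp [Set.indicator_of_notMem h]
  · rintro ⟨a₁, b₁⟩ ⟨h1, h2⟩ ⟨a₂, b₂⟩ ⟨h3, h4⟩ h
    have ha : a₁ = a₂ := hinj a₁ h1 a₂ h3 b₁ h2 b₂ h4 h
    subst ha
    have hb : b₁ = b₂ := by
      have := List.append_inj h rfl
      exact this.2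
    simp [hb]
  · rintro ⟨a, b⟩ ⟨h1, h2⟩
    exact hmem a h1 b h2
  · rintro ⟨a, b⟩ ⟨h1, h2⟩
    simp [Set.indicator_of_mem h1, Set.indicator_of_mem h2, pword_append]
  · intro v hv
    obtain ⟨a, ha, b, hb, hab⟩ := hsurj v hv
    exact ⟨(a, b), ⟨ha, hb⟩, hab⟩

/-- splitting a fixed-length constraint. -/
lemma WS_split (h0 : ∀ x, p x ≠ 0) (m n : ℕ) (S T : List (Fin r) → Prop) :
    WS p {v | v.length = m + n ∧ S (v.take m) ∧ T (v.drop m)}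
      = WS p {a | a.length = m ∧ S a} * WS p {b | b.length = n ∧ T b} := by
  apply WS_eq_mul h0
  · rintro a₁ ⟨hl1, -⟩ a₂ ⟨hl2, -⟩ b₁ - b₂ - h
    exact (List.append_inj h (hl1.trans hl2.symm)).1
  · rintro a ⟨hl1, hS⟩ b ⟨hl2, hT⟩
    refine ⟨by simp [List.length_append, hl1, hl2], ?_, ?_⟩
    · rwa [List.take_left' hl1]
    · rwa [List.drop_left' hl1]
  · rintro v ⟨hl, hS, hT⟩
    refine ⟨v.take m, ⟨?_, hS⟩, v.drop m, ⟨?_, hT⟩, List.take_append_drop m v⟩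
    · simp [List.length_take, hl]
    · simp [List.length_drop, hl]

/-- stratification by length. -/
lemma WS_stratify (S : Set (List (Fin r))) :
    WS p S = ∑' n : ℕ, WS p {v | v.length = n ∧ v ∈ S} := by
  rw [WS]
  have h : ∀ v : List (Fin r), S.indicator (pword p) v
      = ∑' n : ℕ, ({v | v.length = n ∧ v ∈ S} : Set (List (Fin r))).indicator (pword p) v := by
    intro v
    rw [tsum_eq_single v.length]
    · by_cases hv : v ∈ S
      · rw [Set.indicator_of_mem hv, Set.indicator_of_mem (by exact ⟨rfl, hv⟩)]
      · rw [Set.indicator_of_notMem hv, Set.indicator_of_notMem (by simp [hv])]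
    · intro n hn
      exact Set.indicator_of_notMem (by simp; intro h; omega) _
  simp_rw [h]
  exact ENNReal.tsum_comm

variable (p)

lemma WS_singleton (v : List (Fin r)) {S : Set (List (Fin r))} (hS : ∀ u, u ∈ S ↔ u = v) :
    WS p S = pword p v := by
  rw [WS, tsum_eq_single v]
  · rw [Set.indicator_of_mem ((hS v).mpr rfl)]
  · intro u hu
    exact Set.indicator_of_notMem (fun h => hu ((hS u).mp h)) _

variable {p}

lemma WS_len_one (h0 : ∀ x, p x ≠ 0) (hp1 : ∑ x, p x = 1) :
    WS p {v : List (Fin r) | v.length = 1} = 1 := by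
  rw [WS_eq_of_bij h0 _ (fun x : Fin r => p x) (fun x => [x]) Set.univ
    (by simp) (by intro a _ b _ h; simpa using h) (by simp)
    (by intro b _; simp) ?_]
  · rw [tsum_fintype]; exact hp1
  · intro v hv
    match v, hv with
    | [x], _ => exact ⟨x, trivial, rfl⟩

lemma WS_len (h0 : ∀ x, p x ≠ 0) (hp1 : ∑ x, p x = 1) (n : ℕ) :
    WS p {v : List (Fin r) | v.length = n} = 1 := by
  induction n with
  | zero =>
    rw [WS_singleton p ([] : List (Fin r)) (by simp [List.length_eq_zero_iff]), pword_nil]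
  | succ n ih =>
    have h : WS p {v : List (Fin r) | v.length = n + 1}
        = WS p {v : List (Fin r) | v.length = n + 1 ∧ (fun _ => True) (v.take n)
            ∧ (fun _ => True) (v.drop n)} := WS_congr p (by simp)
    rw [h, WS_split h0 n 1 (fun _ => True) (fun _ => True)]
    have e1 : {a : List (Fin r) | a.length = n ∧ True} = {a : List (Fin r) | a.length = n} := by simp
    have e2 : {b : List (Fin r) | b.length = 1 ∧ True} = {b : List (Fin r) | b.length = 1} := by simp
    rw [e1, e2, ih, WS_len_one h0 hp1, one_mul]

end SNB

namespace SNB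
open List

variable {r : ℕ} {p : Fin r → ℝ≥0∞}

theorem factA (h0 : ∀ x, p x ≠ 0) (h1 : ∀ x, p x ≤ 1) (hp1 : ∑ x, p x = 1)
    {u : List (Fin r)} (hu : u ≠ []) :
    WS p {z | FirstOcc u z} = 1 := by
  classical
  set q := pword p u with hq
  have hq0 : q ≠ 0 := pword_ne_zero h0 u
  have hqt : q ≠ ⊤ := pword_ne_top h1 u
  set a : ℕ → ℝ≥0∞ := fun n => WS p {v | v.length = n ∧ ¬ u <:+: v} with ha
  set c : ℕ → ℝ≥0∞ := fun n => WS p {z | z.length = n ∧ FirstOcc u z} with hc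
  have hupos : 0 < u.length := List.length_pos_iff.mpr hu
  have ha0 : a 0 = 1 := by
    rw [ha]
    simp only
    rw [WS_singleton p ([] : List (Fin r)) ?_, pword_nil]
    intro v
    constructor
    · rintro ⟨hl, -⟩; exact List.length_eq_zero_iff.mp hl
    · rintro rfl; exact ⟨rfl, fun h => hu (List.infix_nil.mp h)⟩
  have hstep : ∀ n, a n = c (n + 1) + a (n + 1) := by
    intro n
    have hL : WS p {v : List (Fin r) | v.length = n + 1 ∧ (¬ u <:+: v.take n)
        ∧ (fun _ => True) (v.drop n)} = a n := by
      rw [WS_split h0 n 1 (fun b => ¬ u <:+: b) (fun _ => True)]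
      have h1' : WS p {b : List (Fin r) | b.length = 1 ∧ (fun _ => True) b} = 1 := by
        rw [WS_congr p (T := {b : List (Fin r) | b.length = 1}) (by simp)]
        exact WS_len_one h0 hp1
      rw [h1', mul_one, ha]
    have hsetsplit : {v : List (Fin r) | v.length = n + 1 ∧ (¬ u <:+: v.take n)
          ∧ (fun _ => True) (v.drop n)}
        = {z | z.length = n + 1 ∧ FirstOcc u z} ∪ {v | v.length = n + 1 ∧ ¬ u <:+: v} := by
      ext v
      simp only [Set.mem_setOf_eq, Set.mem_union, and_true]
      constructor
      · rintro ⟨hl, hfree⟩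
        have hdl : v.take n = v.dropLast := by
          rw [dropLast_eq_take, hl]; norm_num
        rw [hdl] at hfree
        by_cases hs : u <:+ v
        · exact Or.inl ⟨hl, hs, hfree⟩
        · refine Or.inr ⟨hl, fun hcon => ?_⟩
          rcases infix_dropLast_or.mp hcon with h | h
          exacts [hfree h, hs h]
      · rintro (⟨hl, -, hfree⟩ | ⟨hl, hfree⟩)
        · refine ⟨hl, ?_⟩
          rwa [show v.take n = v.dropLast by rw [dropLast_eq_take, hl]; norm_num]
        · exact ⟨hl, fun h => hfree (h.trans (take_prefix n v).isInfix)⟩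
    have hdisj : Disjoint {z : List (Fin r) | z.length = n + 1 ∧ FirstOcc u z}
        {v : List (Fin r) | v.length = n + 1 ∧ ¬ u <:+: v} := by
      rw [Set.disjoint_left]
      rintro v ⟨-, hfo⟩ ⟨-, hfree⟩
      exact hfree hfo.1.isInfix
    rw [← hL, hsetsplit, WS_union p hdisj, hc, ha]
  have hpartial : ∀ N, (∑ k ∈ Finset.range (N + 1), c k) + a N = 1 := by
    intro N
    induction N with
    | zero =>
      have hc0 : c 0 = 0 := by
        rw [hc]
        simp only
        rw [show {z : List (Fin r) | z.length = 0 ∧ FirstOcc u z} = (∅ : Set _) from ?_, WS_empty]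
        ext z
        simp only [Set.mem_setOf_eq, Set.mem_empty_iff_false, iff_false, not_and]
        intro hl
        rw [List.length_eq_zero_iff.mp hl]
        rintro ⟨hsuf, -⟩
        exact hu (suffix_nil.mp hsuf)
      rw [Finset.sum_range_one, hc0, zero_add, ha0]
    | succ N ih =>
      rw [Finset.sum_range_succ, add_assoc, ← hstep N]
      exact ih
  have hgeom : ∀ m, a (m * u.length) ≤ (1 - q) ^ m := by
    intro m
    induction m with
    | zero => simp [ha0]
    | succ m ih =>
      have hsub : {v : List (Fin r) | v.length = m * u.length + u.length ∧ ¬ u <:+: v}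
          ⊆ {v | v.length = m * u.length + u.length ∧ (¬ u <:+: v.take (m * u.length))
              ∧ (fun b => b ≠ u) (v.drop (m * u.length))} := by
        rintro v ⟨hl, hfree⟩
        refine ⟨hl, fun h => hfree (h.trans (take_prefix _ _).isInfix), fun h => hfree ?_⟩
        rw [← h]
        exact (drop_suffix _ _).isInfix
      have hle := WS_mono p hsub
      rw [WS_split h0 (m * u.length) u.length (fun b => ¬ u <:+: b) (fun b => b ≠ u)] at hle
      have hsnd : WS p {b : List (Fin r) | b.length = u.length ∧ b ≠ u} = 1 - q := by
        have hdisj2 : Disjoint {b : List (Fin r) | b.length = u.length ∧ b ≠ u}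
            {b : List (Fin r) | b.length = u.length ∧ b = u} := by
          rw [Set.disjoint_left]
          rintro b ⟨-, hne⟩ ⟨-, rfl⟩
          exact hne rfl
        have hun : WS p {b : List (Fin r) | b.length = u.length}
            = WS p {b | b.length = u.length ∧ b ≠ u} + WS p {b | b.length = u.length ∧ b = u} := by
          rw [← WS_union p hdisj2]
          apply WS_congr
          intro v
          by_cases hv : v = u
          · subst hv; simp
          · simp [hv]
        rw [WS_len h0 hp1] at hun
        have hsingle : WS p {b : List (Fin r) | b.length = u.length ∧ b = u} = q := by
          rw [WS_singleton p u ?_, hq]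
          intro b
          constructor
          · rintro ⟨-, h⟩; exact h
          · rintro rfl; exact ⟨rfl, rfl⟩
        rw [hsingle] at hun
        exact ENNReal.eq_sub_of_add_eq hqt hun.symm
      calc a ((m + 1) * u.length) = a (m * u.length + u.length) := by rw [Nat.succ_mul]
        _ ≤ WS p {a_1 : List (Fin r) | a_1.length = m * u.length ∧ ¬ u <:+: a_1}
            * WS p {b : List (Fin r) | b.length = u.length ∧ b ≠ u} := hle
        _ ≤ (1 - q) ^ m * (1 - q) := by
            rw [hsnd]
            exact mul_le_mul' ih le_rfl
        _ = (1 - q) ^ (m + 1) := (pow_succ _ m).symm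
  have hstrat : WS p {z | FirstOcc u z} = ∑' n, c n := by
    rw [WS_stratify]
    rfl
  rw [hstrat, ENNReal.tsum_eq_iSup_nat]
  apply _root_.le_antisymm
  · apply iSup_le
    intro N
    cases N with
    | zero => simp
    | succ N =>
      calc ∑ k ∈ Finset.range (N + 1), c k
          ≤ (∑ k ∈ Finset.range (N + 1), c k) + a N := le_self_add
        _ = 1 := hpartial N
  · have hub : ∀ m : ℕ, (1 : ℝ≥0∞) ≤ (⨆ N, ∑ k ∈ Finset.range N, c k) + (1 - q) ^ m := by
      intro m
      calc (1 : ℝ≥0∞) = (∑ k ∈ Finset.range (m * u.length + 1), c k) + a (m * u.length) :=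
            (hpartial (m * u.length)).symm
        _ ≤ (⨆ N, ∑ k ∈ Finset.range N, c k) + (1 - q) ^ m :=
            add_le_add (le_iSup (fun N => ∑ k ∈ Finset.range N, c k) (m * u.length + 1)) (hgeom m)
    have hlt1 : (1 : ℝ≥0∞) - q < 1 := ENNReal.sub_lt_self one_ne_top one_ne_zero hq0
    have htend : Filter.Tendsto (fun m : ℕ => (⨆ N, ∑ k ∈ Finset.range N, c k) + (1 - q) ^ m)
        Filter.atTop (nhds ((⨆ N, ∑ k ∈ Finset.range N, c k) + 0)) :=
      Filter.Tendsto.const_add _ (ENNReal.tendsto_pow_atTop_nhds_zero_of_lt_one hlt1)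
    have hfin := ge_of_tendsto' htend hub
    simpa using hfin

theorem factB (h0 : ∀ x, p x ≠ 0) {w wh : List (Fin r)}
    (hpre : wh <+: w) (hlen : wh.length < w.length)
    (hmax : ∀ v, v ≠ w → v <+: w → v <:+ w → v.length ≤ wh.length) :
    WS p {z | FirstOcc w z} = pword p w * WS p {x | ¬ w <:+: x ++ wh} := by
  rw [WS_eq_of_bij h0 _
      (fun x : List (Fin r) =>
        pword p w * ({x | ¬ w <:+: x ++ wh} : Set (List (Fin r))).indicator (pword p) x)
      (fun x => x ++ w) {x | ¬ w <:+: x ++ wh} ?_ ?_ ?_ ?_ ?_]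
  · rw [ENNReal.tsum_mul_left, WS]
  · intro b hb
    simp [Set.indicator_of_notMem hb]
  · intro a _ b _ h
    exact List.append_cancel_right h
  · intro b hb
    exact firstOcc_append hpre hlen hmax hb
  · intro b hb
    simp only [Set.indicator_of_mem hb, pword_append]
    exact mul_comm _ _
  · intro z hz
    obtain ⟨x, rfl, hx⟩ := exists_of_firstOcc hpre hlen hz
    exact ⟨x, hx, rfl⟩

theorem decomp (h0 : ∀ x, p x ≠ 0) {w wh : List (Fin r)} (hne : wh ≠ []) (hpre : wh <+: w) :
    WS p {v | ¬ w <:+: v}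
      = WS p {v | ¬ wh <:+: v}
        + WS p {z | FirstOcc wh z} * WS p {v' | ¬ w <:+: wh ++ v'} := by
  have hsetsplit : {v : List (Fin r) | ¬ w <:+: v}
      = {v | ¬ wh <:+: v} ∪ {v | ¬ w <:+: v ∧ wh <:+: v} := by
    ext v
    simp only [Set.mem_setOf_eq, Set.mem_union]
    constructor
    · intro h
      by_cases hwh : wh <:+: v
      exacts [Or.inr ⟨h, hwh⟩, Or.inl hwh]
    · rintro (h | ⟨h, -⟩)
      · exact fun hcon => h (hpre.isInfix.trans hcon)
      · exact h
  have hdisj : Disjoint {v : List (Fin r) | ¬ wh <:+: v} {v | ¬ w <:+: v ∧ wh <:+: v} := by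
    rw [Set.disjoint_left]
    rintro v h ⟨-, h2⟩
    exact h h2
  rw [hsetsplit, WS_union p hdisj]
  congr 1
  apply WS_eq_mul h0
  · rintro a₁ ha₁ a₂ ha₂ b₁ - b₂ - h
    exact (firstOcc_inj ha₁ ha₂ h).1
  · intro a ha b hb
    exact firstOcc_comp hpre ha hb
  · rintro v ⟨h1, h2⟩
    obtain ⟨z, v', rfl, hz, hv'⟩ := split_full hne h1 h2
    exact ⟨z, hz, v', hv', rfl⟩

lemma WS_reverse (h0 : ∀ x, p x ≠ 0) (S T : Set (List (Fin r)))
    (h : ∀ v, v ∈ T ↔ v.reverse ∈ S) : WS p S = WS p T := by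
  rw [WS_eq_of_bij h0 S (fun v => T.indicator (pword p) v) (fun v => v.reverse) T ?_ ?_ ?_ ?_ ?_]
  · rw [WS]
  · intro b hb
    exact Set.indicator_of_notMem hb _
  · intro a _ b _ hab
    exact List.reverse_injective hab
  · intro b hb
    exact (h b).mp hb
  · intro b hb
    simp only [Set.indicator_of_mem hb]
    exact pword_reverse p b
  · intro v hv
    exact ⟨v.reverse, (h v.reverse).mpr (by simpa using hv), by simp⟩

end SNB

namespace SNB
open List

variable {r : ℕ} {p : Fin r → ℝ≥0∞}

theorem main_comb (h0 : ∀ x, p x ≠ 0) (h1 : ∀ x, p x ≤ 1) (hp1 : ∑ x, p x = 1)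
    {w wh : List (Fin r)} (hw : w ≠ []) (hbif : IsLongestBifix wh w) :
    WS p {v | ¬ w <:+: v} = WS p {v | ¬ wh <:+: v} + (pword p w)⁻¹ := by
  obtain ⟨⟨hne_w, hpre, hsuf⟩, hmax0⟩ := hbif
  have hmax : ∀ v, v ≠ w → v <+: w → v <:+ w → v.length ≤ wh.length :=
    fun v h1' h2 h3 => hmax0 v ⟨h1', h2, h3⟩
  have hlen : wh.length < w.length :=
    lt_of_le_of_ne hpre.length_le (fun h => hne_w (hpre.eq_of_length h))
  have hq0 : pword p w ≠ 0 := pword_ne_zero h0 w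
  have hqt : pword p w ≠ ⊤ := pword_ne_top h1 w
  have hBA : pword p w * WS p {x | ¬ w <:+: x ++ wh} = 1 := by
    rw [← factB h0 hpre hlen hmax]
    exact factA h0 h1 hp1 hw
  have hH : WS p {x | ¬ w <:+: x ++ wh} = (pword p w)⁻¹ := by
    have h2 : (pword p w)⁻¹ * (pword p w * WS p {x | ¬ w <:+: x ++ wh})
        = (pword p w)⁻¹ * 1 := by rw [hBA]
    rwa [← mul_assoc, ENNReal.inv_mul_cancel hq0 hqt, one_mul, mul_one] at h2
  by_cases hwh_nil : wh = []
  · subst hwh_nil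
    have e1 : WS p {v : List (Fin r) | ¬ ([] : List (Fin r)) <:+: v} = 0 := by
      rw [show {v : List (Fin r) | ¬ ([] : List (Fin r)) <:+: v} = (∅ : Set _) by
        ext v; simp [List.nil_infix], WS_empty]
    have e2 : WS p {v : List (Fin r) | ¬ w <:+: v} = (pword p w)⁻¹ := by
      rw [← hH]
      apply WS_congr
      intro v
      simp
    rw [e1, e2, zero_add]
  · have hrev_pre : wh.reverse <+: w.reverse := List.reverse_prefix.mpr hsuf
    have hrev_ne : wh.reverse ≠ [] := by simpa using hwh_nil
    have hA : WS p {v : List (Fin r) | ¬ w <:+: v}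
        = WS p {v : List (Fin r) | ¬ w.reverse <:+: v} := by
      apply WS_reverse h0
      intro v
      simp only [Set.mem_setOf_eq]
      rw [← List.reverse_infix (l₁ := w) (l₂ := v.reverse), List.reverse_reverse]
    have hAwh : WS p {v : List (Fin r) | ¬ wh <:+: v}
        = WS p {v : List (Fin r) | ¬ wh.reverse <:+: v} := by
      apply WS_reverse h0
      intro v
      simp only [Set.mem_setOf_eq]
      rw [← List.reverse_infix (l₁ := wh) (l₂ := v.reverse), List.reverse_reverse]
    have hG : WS p {v' : List (Fin r) | ¬ w.reverse <:+: wh.reverse ++ v'}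
        = WS p {x : List (Fin r) | ¬ w <:+: x ++ wh} := by
      apply WS_reverse h0
      intro x
      simp only [Set.mem_setOf_eq]
      rw [show wh.reverse ++ x.reverse = (x ++ wh).reverse from List.reverse_append.symm,
        List.reverse_infix]
    calc WS p {v : List (Fin r) | ¬ w <:+: v}
        = WS p {v : List (Fin r) | ¬ w.reverse <:+: v} := hA
      _ = WS p {v : List (Fin r) | ¬ wh.reverse <:+: v}
          + WS p {z | FirstOcc wh.reverse z}
            * WS p {v' | ¬ w.reverse <:+: wh.reverse ++ v'} := decomp h0 hrev_ne hrev_pre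
      _ = WS p {v : List (Fin r) | ¬ wh <:+: v} + 1 * (pword p w)⁻¹ := by
          rw [← hAwh, factA h0 h1 hp1 hrev_ne, hG, hH]
      _ = WS p {v : List (Fin r) | ¬ wh <:+: v} + (pword p w)⁻¹ := by rw [one_mul]

/-! ### the measure-theoretic translation -/

/-- the first `n` letters of `ξ` as a list. -/
def res (n : ℕ) (ξ : ℕ → Fin r) : List (Fin r) := List.ofFn (fun i : Fin n => ξ i)

lemma res_length (n : ℕ) (ξ : ℕ → Fin r) : (res n ξ).length = n := List.length_ofFn

lemma res_getElem {n : ℕ} {ξ : ℕ → Fin r} {i : ℕ} (h : i < (res n ξ).length) :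
    (res n ξ)[i] = ξ i := by
  simp [res, List.getElem_ofFn]

lemma suffix_take_iff {α : Type*} {l w : List α} {k : ℕ} (hk : k ≤ l.length)
    (hwk : w.length ≤ k) :
    w <:+ l.take k ↔ ∀ j (hj : j < w.length), l[k - w.length + j]'(by omega) = w[j] := by
  have hlt : (l.take k).length = k := by simp [length_take]; omega
  constructor
  · intro h j hj
    rw [suffix_iff_eq_drop, hlt] at h
    have hj' : j < ((l.take k).drop (k - w.length)).length := by
      simp only [length_drop, hlt]; omega
    calc l[k - w.length + j]'(by omega)
        = (l.take k)[k - w.length + j]'(by rw [hlt]; omega) := List.getElem_take.symm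
      _ = ((l.take k).drop (k - w.length))[j]'hj' := List.getElem_drop.symm
      _ = w[j] := List.getElem_of_eq h.symm hj'
  · intro h
    rw [suffix_iff_eq_drop, hlt]
    apply List.ext_getElem
    · simp only [length_drop, hlt]; omega
    · intro j h₁ h₂
      rw [List.getElem_drop, List.getElem_take]
      exact (h j h₁).symm

lemma suffix_take_res {w : List (Fin r)} {ξ : ℕ → Fin r} {n k : ℕ} (hkn : k ≤ n)
    (hwk : w.length ≤ k)
    (h : ∀ j : ℕ, (hj : j < w.length) → ξ (k - w.length + j) = w.get ⟨j, hj⟩) :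
    w <:+ (res n ξ).take k := by
  rw [suffix_take_iff (by rw [res_length]; exact hkn) hwk]
  intro j hj
  rw [res_getElem]
  have hthis := h j hj
  rw [List.get_eq_getElem] at hthis
  exact hthis

lemma of_suffix_take {w : List (Fin r)} {ξ : ℕ → Fin r} {n k : ℕ} (hkn : k ≤ n)
    (h : w <:+ (res n ξ).take k) :
    w.length ≤ k ∧ ∀ j : ℕ, (hj : j < w.length) → ξ (k - w.length + j) = w.get ⟨j, hj⟩ := by
  have hlt : ((res n ξ).take k).length = k := by simp [res, length_take]; omega
  have hwl : w.length ≤ k := by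
    have := h.length_le
    omega
  refine ⟨hwl, fun j hj => ?_⟩
  rw [suffix_take_iff (by rw [res_length]; exact hkn) hwl] at h
  have hthis := h j hj
  rw [res_getElem] at hthis
  rw [List.get_eq_getElem]
  exact hthis

end SNB

namespace SNB
open List

variable {r : ℕ} {p : Fin r → ℝ≥0∞}

lemma waitTime_eq (w : List (Fin r)) (ξ : ℕ → Fin r) :
    waitTime w ξ = ∑' n : ℕ, (if ¬ w <:+: res n ξ then (1 : ℝ≥0∞) else 0) := by
  classical
  set K : Set ℕ := {k | w.length ≤ k ∧ ∀ j : ℕ, (hj : j < w.length) →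
    ξ (k - w.length + j) = w.get ⟨j, hj⟩} with hK
  have hset : {t : ℝ≥0∞ | ∃ k : ℕ, t = k ∧ w.length ≤ k ∧ ∀ j : ℕ, (hj : j < w.length) →
      ξ (k - w.length + j) = w.get ⟨j, hj⟩} = (fun k : ℕ => (k : ℝ≥0∞)) '' K := by
    ext t
    simp only [Set.mem_setOf_eq, Set.mem_image, hK]
    constructor
    · rintro ⟨k, rfl, h⟩; exact ⟨k, h, rfl⟩
    · rintro ⟨k, h, rfl⟩; exact ⟨k, rfl, h⟩
  have hWT : waitTime w ξ = sInf ((fun k : ℕ => (k : ℝ≥0∞)) '' K) := by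
    rw [waitTime, hset]
  have hiff : ∀ n : ℕ, (¬ w <:+: res n ξ) ↔ (∀ k ∈ K, n < k) := by
    intro n
    constructor
    · intro hno k hkK
      by_contra hcon
      push_neg at hcon
      exact hno (infix_iff_exists_take.mpr
        ⟨k, by rw [res_length]; exact hcon, suffix_take_res hcon hkK.1 hkK.2⟩)
    · intro hall hcon
      obtain ⟨k, hk, hs⟩ := infix_iff_exists_take.mp hcon
      rw [res_length] at hk
      obtain ⟨hwk, hprop⟩ := of_suffix_take hk hs
      exact absurd (hall k ⟨hwk, hprop⟩) (by omega)
  by_cases hKe : K = ∅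
  · rw [hWT, hKe]
    simp only [Set.image_empty, sInf_empty]
    have hall : ∀ n : ℕ, ¬ w <:+: res n ξ := fun n => (hiff n).mpr
      (fun k hk => by rw [hKe] at hk; exact absurd hk (Set.notMem_empty k))
    rw [tsum_congr (fun n => if_pos (hall n))]
    exact (ENNReal.tsum_const_eq_top_of_ne_zero one_ne_zero).symm
  · have hEx : ∃ k, k ∈ K := Set.nonempty_iff_ne_empty.mpr hKe
    set m := Nat.find hEx with hm
    have hmK : m ∈ K := Nat.find_spec hEx
    have hmin : ∀ k ∈ K, m ≤ k := fun k hk => Nat.find_min' hEx hk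
    have h1 : waitTime w ξ = (m : ℝ≥0∞) := by
      rw [hWT]
      apply _root_.le_antisymm
      · exact sInf_le ⟨m, hmK, rfl⟩
      · apply le_sInf
        rintro t ⟨k, hk, rfl⟩
        exact Nat.cast_le.mpr (hmin k hk)
    have h2 : ∀ n : ℕ, (¬ w <:+: res n ξ) ↔ n < m := by
      intro n
      rw [hiff n]
      constructor
      · exact fun h => h m hmK
      · intro h k hk
        exact lt_of_lt_of_le h (hmin k hk)
    have h3 : ∀ n : ℕ, (if ¬ w <:+: res n ξ then (1 : ℝ≥0∞) else 0)
        = (if n < m then 1 else 0) := by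
      intro n
      by_cases hn : n < m
      · rw [if_pos ((h2 n).mpr hn), if_pos hn]
      · rw [if_neg (fun hcon => hn ((h2 n).mp hcon)), if_neg hn]
    rw [h1, tsum_congr h3, tsum_eq_sum (s := Finset.range m)
      (fun n hn => if_neg (by simpa using hn)),
      Finset.sum_congr rfl (fun n hn => if_pos (Finset.mem_range.mp hn))]
    simp

lemma Ew_eq (hr0 : 0 < r) (h0 : ∀ x, p x ≠ 0) (μ : Measure (ℕ → Fin r))
    (hiid : ∀ (m : ℕ) (f : ℕ → Fin r),
      μ {ξ | ∀ i < m, ξ i = f i} = ∏ i ∈ Finset.range m, p (f i))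
    (w : List (Fin r)) :
    Ew μ w = WS p {v | ¬ w <:+: v} := by
  classical
  have hMeq : ∀ n : ℕ, {ξ : ℕ → Fin r | ¬ w <:+: res n ξ}
      = ⋃ (f : {f : Fin n → Fin r // ¬ w <:+: List.ofFn f}),
          {ξ : ℕ → Fin r | ∀ i : Fin n, ξ i = f.val i} := by
    intro n
    ext ξ
    simp only [Set.mem_setOf_eq, Set.mem_iUnion]
    constructor
    · intro h
      exact ⟨⟨fun i => ξ i, h⟩, fun i => rfl⟩
    · rintro ⟨⟨f, hf⟩, hξ⟩
      have he : res n ξ = List.ofFn f := by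
        unfold res
        congr 1
        funext i
        exact hξ i
      rwa [he]
  have hcylM : ∀ (n : ℕ) (f : Fin n → Fin r),
      MeasurableSet {ξ : ℕ → Fin r | ∀ i : Fin n, ξ i = f i} := by
    intro n f
    have he : {ξ : ℕ → Fin r | ∀ i : Fin n, ξ i = f i}
        = ⋂ i : Fin n, (fun ξ : ℕ → Fin r => ξ (i : ℕ)) ⁻¹' {f i} := by
      ext ξ
      simp [Set.mem_iInter]
    rw [he]
    exact MeasurableSet.iInter
      (fun i => (measurable_pi_apply (i : ℕ)) (measurableSet_singleton (f i)))
  have hM : ∀ n : ℕ, MeasurableSet {ξ : ℕ → Fin r | ¬ w <:+: res n ξ} := by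
    intro n
    rw [hMeq n]
    exact MeasurableSet.iUnion (fun f => hcylM n f.val)
  have hcylμ : ∀ (n : ℕ) (f : Fin n → Fin r),
      μ {ξ : ℕ → Fin r | ∀ i : Fin n, ξ i = f i} = pword p (List.ofFn f) := by
    intro n f
    have hext : {ξ : ℕ → Fin r | ∀ i : Fin n, ξ i = f i}
        = {ξ : ℕ → Fin r | ∀ i < n,
            ξ i = (fun i => if h : i < n then f ⟨i, h⟩ else (⟨0, hr0⟩ : Fin r)) i} := by
      ext ξ
      simp only [Set.mem_setOf_eq]
      constructor
      · intro h i hi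
        rw [dif_pos hi]
        exact h ⟨i, hi⟩
      · intro h i
        have := h i i.isLt
        rwa [dif_pos i.isLt] at this
    rw [hext, hiid n _, ← Fin.prod_univ_eq_prod_range, pword, List.map_ofFn, List.prod_ofFn]
    apply Finset.prod_congr rfl
    intro i _
    simp [Function.comp, i.isLt]
  have hμWS : ∀ n : ℕ, μ {ξ : ℕ → Fin r | ¬ w <:+: res n ξ}
      = WS p {v | v.length = n ∧ ¬ w <:+: v} := by
    intro n
    have hdisjp : _root_.Pairwise (Function.onFun _root_.Disjoint
        (fun f : {f : Fin n → Fin r // ¬ w <:+: List.ofFn f} =>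
          {ξ : ℕ → Fin r | ∀ i : Fin n, ξ i = f.val i})) := by
      intro f g hfg
      rw [Function.onFun, Set.disjoint_left]
      intro ξ hξf hξg
      exact hfg (Subtype.ext (funext fun i => by rw [← hξf i, hξg i]))
    rw [hMeq n, measure_iUnion hdisjp (fun f => hcylM n f.val)]
    refine (WS_eq_of_bij h0 {v | v.length = n ∧ ¬ w <:+: v}
        (fun f : {f : Fin n → Fin r // ¬ w <:+: List.ofFn f} =>
          μ {ξ : ℕ → Fin r | ∀ i : Fin n, ξ i = f.val i})
        (fun f => List.ofFn f.val) Set.univ ?_ ?_ ?_ ?_ ?_).symm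
    · intro b hb
      exact absurd (Set.mem_univ b) hb
    · intro b₁ _ b₂ _ h
      exact Subtype.ext (List.ofFn_inj.mp h)
    · intro b _
      exact ⟨List.length_ofFn, b.prop⟩
    · intro b _
      exact (hcylμ n b.val).symm
    · rintro v ⟨hvl, hvf⟩
      refine ⟨⟨fun i => v[(i : ℕ)]'(by omega), ?_⟩, Set.mem_univ _, ?_⟩
      · have he : List.ofFn (fun i : Fin n => v[(i : ℕ)]'(by omega)) = v := by
          apply List.ext_getElem
          · simp [hvl]
          · intro j h₁ h₂
            simp [List.getElem_ofFn]
        rwa [he]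
      · apply List.ext_getElem
        · simp [hvl]
        · intro j h₁ h₂
          simp [List.getElem_ofFn]
  have hintegrand : ∀ ξ : ℕ → Fin r, waitTime w ξ
      = ∑' n : ℕ, ({ξ' : ℕ → Fin r | ¬ w <:+: res n ξ'}).indicator 1 ξ := by
    intro ξ
    rw [waitTime_eq]
    apply tsum_congr
    intro n
    by_cases h : w <:+: res n ξ
    · rw [if_neg (by simpa using h), Set.indicator_of_notMem (by simpa using h)]
    · rw [if_pos h, Set.indicator_of_mem (by exact h)]
      rfl
  have hswap := lintegral_tsum (μ := μ)
    (f := fun n : ℕ => ({ξ' : ℕ → Fin r | ¬ w <:+: res n ξ'}).indicator 1)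
    (fun n => (measurable_const.indicator (hM n)).aemeasurable)
  rw [Ew, lintegral_congr hintegrand, hswap, WS_stratify]
  apply tsum_congr
  intro n
  rw [lintegral_indicator_one (hM n), hμWS n]
  rfl

end SNB

theorem statement_11 {r : ℕ} (hr : 2 ≤ r) (p : Fin r → ℝ≥0∞)
    (hp1 : ∑ x, p x = 1) (hpos : ∀ x, 0 < p x)
    (μ : Measure (ℕ → Fin r)) [IsProbabilityMeasure μ]
    (hiid : ∀ (m : ℕ) (f : ℕ → Fin r),
      μ {ξ | ∀ i < m, ξ i = f i} = ∏ i ∈ Finset.range m, p (f i))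
    (w : List (Fin r)) (hw : w ≠ []) (wHat : List (Fin r))
    (hwHat : IsLongestBifix wHat w) :
    Ew μ w = Ew μ wHat + (pword p w)⁻¹ := by
  have h0 : ∀ x, p x ≠ 0 := fun x => (hpos x).ne'
  have hple : ∀ x, p x ≤ 1 := fun x => by
    rw [← hp1]
    exact Finset.single_le_sum (fun i _ => zero_le) (Finset.mem_univ x)
  have hr0 : 0 < r := by omega
  rw [SNB.Ew_eq hr0 h0 μ hiid w, SNB.Ew_eq hr0 h0 μ hiid wHat]
  exact SNB.main_comb h0 hple hp1 hw hwHat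
end
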